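/- arXiv:math/0010244 — 6 statements merged into one kernel-verified Lean document; each statement's English description precedes it below -/
import Mathlib

section
/- If w is a submultiplicative weight function on the integers satisfying the Gelfand–Raikov–Shilov condition (lim_{n→∞} w(n)^{1/n} = 1 and lim_{n→∞} w(-n)^{1/n} = 1), then every function f in the weighted Wiener algebra A_w (absolutely convergent Fourier series with weight w) that satisfies f(ω) ≠ 0 for all ω has an inverse 1/f in A_w. -/
/-!
Under the isometry `c ↦ (k ↦ c k * w k)` onto `ℓ¹(ℤ)`, `A_w` becomes a commutative unital Banach
algebra whose product is the convolution of Fourier coefficients; submultiplicativity of `w` is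
exactly what makes the norm submultiplicative. By Gelfand theory an element on which no character
vanishes is invertible. A character `φ` is determined by the additive character `ψ n = φ (e_n)` of
`ℤ`, and `‖ψ n‖ ≤ ‖e_n‖ = w n`; the GRS condition applied to `ψ (±n) = ψ (±1) ^ n` forces
`‖ψ 1‖ = 1`, so `φ` is evaluation of the Fourier series at a point of the circle, where `f` does
not vanish. The inverse found in `A_w` has weighted-summable coefficients by construction.
-/

open Filter Topology

noncomputable section

namespace WienerAlgebra

def antidiagonalEquiv (G : Type*) [AddCommGroup G] : G × G ≃ G × G where
  toFun q := (q.2, q.1 - q.2)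
  invFun p := (p.1 + p.2, p.1)
  left_inv q := by simp
  right_inv p := by simp

section Convolution

variable {G 𝕜 : Type*} [AddCommGroup G] [NormedField 𝕜]

def conv (f g : G → 𝕜) (k : G) : 𝕜 := ∑' l, f l * g (k - l)

variable {f g h : G → 𝕜}

lemma summable_norm_mul_sub (hf : Summable fun k => ‖f k‖) (hg : Summable fun k => ‖g k‖)
    (k : G) : Summable fun l => ‖f l * g (k - l)‖ :=
  ((antidiagonalEquiv G).summable_iff.2 (hf.mul_norm hg)).prod_factor k

lemma hasSum_conv [CompleteSpace 𝕜] (hf : Summable fun k => ‖f k‖)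
    (hg : Summable fun k => ‖g k‖) : HasSum (conv f g) ((∑' k, f k) * ∑' k, g k) := by
  have hF := (antidiagonalEquiv G).summable_iff.2 (summable_mul_of_summable_norm hf hg)
  rw [tsum_mul_tsum_of_summable_norm hf hg, ← (antidiagonalEquiv G).tsum_eq]
  exact hF.hasSum.prod_fiberwise fun k => (hF.prod_factor k).hasSum

lemma conv_comm (f g : G → 𝕜) : conv f g = conv g f := by
  ext k
  rw [conv, conv, ← (Equiv.subLeft k).tsum_eq]
  simp [mul_comm]

@[simp]
lemma zero_conv (f : G → 𝕜) : conv 0 f = 0 := by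
  ext k
  simp [conv]

lemma conv_add [CompleteSpace 𝕜] (k : G) (hg : Summable fun l => f l * g (k - l))
    (hh : Summable fun l => f l * h (k - l)) : conv f (g + h) k = conv f g k + conv f h k := by
  simp only [conv, Pi.add_apply, mul_add, hg.tsum_add hh]

lemma conv_smul (c : 𝕜) (f g : G → 𝕜) : conv (c • f) g = c • conv f g := by
  ext k
  simp only [conv, Pi.smul_apply, smul_eq_mul, mul_assoc, tsum_mul_left]

lemma conv_assoc [CompleteSpace 𝕜] (k : G)
    (hT : Summable fun p : G × G => f p.1 * g p.2 * h (k - p.1 - p.2)) :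
    conv (conv f g) h k = conv f (conv g h) k := by
  have hT' := (antidiagonalEquiv G).summable_iff.2 hT
  calc conv (conv f g) h k
      = ∑' j, ∑' l, f l * g (j - l) * h (k - l - (j - l)) := by
        simp only [conv, sub_sub_sub_cancel_right, tsum_mul_right]
    _ = ∑' p : G × G, f p.1 * g p.2 * h (k - p.1 - p.2) :=
        (hT'.tsum_prod' hT'.prod_factor).symm.trans
          ((antidiagonalEquiv G).tsum_eq fun p => f p.1 * g p.2 * h (k - p.1 - p.2))
    _ = conv f (conv g h) k := by
        rw [hT.tsum_prod' hT.prod_factor]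
        simp only [conv, sub_sub, ← tsum_mul_left, ← mul_assoc]

lemma conv_single_zero_left [DecidableEq G] (f : G → 𝕜) : conv (Pi.single 0 1) f = f := by
  ext k
  rw [conv, tsum_eq_single 0 fun l hl => by simp [hl]]
  simp

lemma conv_single_single [DecidableEq G] (m n : G) (a b : 𝕜) :
    conv (Pi.single m a) (Pi.single n b) = Pi.single (m + n) (a * b) := by
  ext k
  rw [conv, tsum_eq_single m fun l hl => by simp [hl]]
  rcases eq_or_ne k (m + n) with rfl | hk
  · simp
  · simp [hk, show k - m ≠ n from fun h => hk (by rw [← h, add_sub_cancel])]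

lemma conv_mul_addChar (ψ : AddChar G 𝕜) (f g : G → 𝕜) (k : G) :
    conv f g k * ψ k = conv (fun l => f l * ψ l) (fun l => g l * ψ l) k := by
  simp only [conv, ← tsum_mul_right]
  refine tsum_congr fun l => ?_
  rw [mul_mul_mul_comm, ← AddChar.map_add_eq_mul, add_sub_cancel]

end Convolution

lemma norm_algHom_apply_le {A : Type*} [NormedRing A] [NormedAlgebra ℂ A] [CompleteSpace A]
    [Nontrivial A] (φ : A →ₐ[ℂ] ℂ) (a : A) : ‖φ a‖ ≤ ‖a‖ :=
  contraction_of_isPowMul (fun x n _ => norm_pow x n) (f := φ.toRingHom)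
    ⟨‖(1 : A)‖, norm_pos_iff.2 one_ne_zero,
      fun x => (AlgHom.norm_apply_le_self_mul_norm_one φ x).trans_eq (mul_comm _ _)⟩ a

structure Weight (G : Type*) [AddCommGroup G] where
  toFun : G → ℝ
  pos' : ∀ k, 0 < toFun k
  le_mul' : ∀ k l, toFun (k + l) ≤ toFun k * toFun l

namespace Weight

variable {G : Type*} [AddCommGroup G] (w : Weight G)

instance : CoeFun (Weight G) fun _ => G → ℝ := ⟨toFun⟩

lemma pos (k : G) : 0 < w k := w.pos' k

lemma le_mul (k l : G) : w (k + l) ≤ w k * w l := w.le_mul' k l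

lemma norm_mul_nonneg (c : G → ℂ) (l : G) : 0 ≤ ‖c l‖ * w l :=
  mul_nonneg (norm_nonneg _) (w.pos l).le

lemma norm_mul_mul_le (x y : ℂ) (l m : G) :
    ‖x * y‖ * w (l + m) ≤ ‖x‖ * w l * (‖y‖ * w m) := by
  rw [norm_mul, mul_mul_mul_comm]
  exact mul_le_mul_of_nonneg_left (w.le_mul l m) (by positivity)

variable {w} {c d e : G → ℂ}

lemma summable_norm_mul_sub (hc : Summable fun k => ‖c k‖ * w k)
    (hd : Summable fun k => ‖d k‖ * w k) (k : G) : Summable fun l => ‖c l * d (k - l)‖ := by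
  refine .of_nonneg_of_le (fun _ => norm_nonneg _) (fun l => ?_)
    ((WienerAlgebra.summable_norm_mul_sub hc.norm hd.norm k).div_const (w k))
  rw [le_div_iff₀ (w.pos k), Real.norm_of_nonneg (mul_nonneg (w.norm_mul_nonneg c l)
    (w.norm_mul_nonneg d (k - l)))]
  simpa using w.norm_mul_mul_le (c l) (d (k - l)) l (k - l)

lemma norm_conv_mul_le (hc : Summable fun k => ‖c k‖ * w k)
    (hd : Summable fun k => ‖d k‖ * w k) (k : G) :
    ‖conv c d k‖ * w k ≤ conv (fun l => ‖c l‖ * w l) (fun l => ‖d l‖ * w l) k := by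
  have hsum := summable_norm_mul_sub hc hd k
  calc ‖conv c d k‖ * w k ≤ (∑' l, ‖c l * d (k - l)‖) * w k :=
        mul_le_mul_of_nonneg_right (norm_tsum_le_tsum_norm hsum) (w.pos k).le
    _ = ∑' l, ‖c l * d (k - l)‖ * w (l + (k - l)) := by simp [tsum_mul_right]
    _ ≤ ∑' l, ‖c l‖ * w l * (‖d (k - l)‖ * w (k - l)) :=
        Summable.tsum_le_tsum (fun l => w.norm_mul_mul_le _ _ _ _)
          (by simpa using hsum.mul_right (w k))
          (WienerAlgebra.summable_norm_mul_sub hc.norm hd.norm k).of_norm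

lemma summable_norm_conv_mul (hc : Summable fun k => ‖c k‖ * w k)
    (hd : Summable fun k => ‖d k‖ * w k) : Summable fun k => ‖conv c d k‖ * w k :=
  .of_nonneg_of_le (fun k => w.norm_mul_nonneg _ k) (norm_conv_mul_le hc hd)
    (hasSum_conv hc.norm hd.norm).summable

lemma tsum_norm_conv_mul_le (hc : Summable fun k => ‖c k‖ * w k)
    (hd : Summable fun k => ‖d k‖ * w k) :
    ∑' k, ‖conv c d k‖ * w k ≤ (∑' k, ‖c k‖ * w k) * ∑' k, ‖d k‖ * w k :=
  (hasSum_conv hc.norm hd.norm).tsum_eq ▸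
    (summable_norm_conv_mul hc hd).tsum_le_tsum (norm_conv_mul_le hc hd)
      (hasSum_conv hc.norm hd.norm).summable

lemma summable_mul_mul_sub_sub (hc : Summable fun k => ‖c k‖ * w k)
    (hd : Summable fun k => ‖d k‖ * w k) (he : Summable fun k => ‖e k‖ * w k) (k : G) :
    Summable fun p : G × G => c p.1 * d p.2 * e (k - p.1 - p.2) := by
  refine .of_norm (.of_nonneg_of_le (fun _ => norm_nonneg _) (fun p => ?_)
    (((hc.mul_of_nonneg hd (w.norm_mul_nonneg c) (w.norm_mul_nonneg d)).mul_right
      (∑' n, ‖e n‖ * w n)).div_const (w k)))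
  have hk : p.1 + p.2 + (k - p.1 - p.2) = k := by abel
  rw [le_div_iff₀ (w.pos k)]
  calc ‖c p.1 * d p.2 * e (k - p.1 - p.2)‖ * w k
      = ‖c p.1 * d p.2 * e (k - p.1 - p.2)‖ * w (p.1 + p.2 + (k - p.1 - p.2)) := by rw [hk]
    _ ≤ ‖c p.1 * d p.2‖ * w (p.1 + p.2) * (‖e (k - p.1 - p.2)‖ * w (k - p.1 - p.2)) :=
        w.norm_mul_mul_le _ _ _ _
    _ ≤ ‖c p.1‖ * w p.1 * (‖d p.2‖ * w p.2) * ∑' n, ‖e n‖ * w n :=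
        mul_le_mul (w.norm_mul_mul_le _ _ _ _) (he.le_tsum _ fun n _ => w.norm_mul_nonneg e n)
          (w.norm_mul_nonneg e _) (mul_nonneg (w.norm_mul_nonneg c _) (w.norm_mul_nonneg d _))

end Weight

/-- The weighted Wiener algebra `A_w`, realised isometrically on `ℓ¹(G)`: the element with Fourier
coefficients `c` is stored as the sequence `k ↦ c k * w k`. -/
def WeightedL1 {G : Type*} [AddCommGroup G] (_w : Weight G) : Type _ := lp (fun _ : G => ℂ) 1

namespace WeightedL1

variable {G : Type*} [AddCommGroup G] {w : Weight G}

instance : NormedAddCommGroup (WeightedL1 w) :=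
  inferInstanceAs (NormedAddCommGroup (lp (fun _ : G => ℂ) 1))

instance : NormedSpace ℂ (WeightedL1 w) := inferInstanceAs (NormedSpace ℂ (lp (fun _ : G => ℂ) 1))

instance : CompleteSpace (WeightedL1 w) := inferInstanceAs (CompleteSpace (lp (fun _ : G => ℂ) 1))

def toLp (a : WeightedL1 w) : lp (fun _ : G => ℂ) 1 := a

def coeff (a : WeightedL1 w) (k : G) : ℂ := toLp a k / w k

def ofCoeff (c : G → ℂ) (hc : Summable fun k => ‖c k‖ * w k) : WeightedL1 w :=
  ⟨fun k => c k * w k, memℓp_gen <| by simpa [Complex.norm_real, abs_of_pos (w.pos _)] using hc⟩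

lemma toLp_apply (a : WeightedL1 w) (k : G) : toLp a k = coeff a k * w k := by
  rw [coeff, div_mul_cancel₀ _ (Complex.ofReal_ne_zero.2 (w.pos k).ne')]

@[simp]
lemma coeff_ofCoeff (c : G → ℂ) (hc : Summable fun k => ‖c k‖ * w k) :
    coeff (ofCoeff c hc) = c := by
  ext k
  exact mul_div_cancel_right₀ _ (Complex.ofReal_ne_zero.2 (w.pos k).ne')

lemma coeff_injective : Function.Injective (coeff (w := w)) := by
  intro a b h
  refine lp.ext (funext fun k => ?_)
  change toLp a k = toLp b k
  rw [toLp_apply, toLp_apply, h]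

lemma norm_eq_tsum (a : WeightedL1 w) : ‖a‖ = ∑' k, ‖coeff a k‖ * w k := by
  have h := lp.norm_eq_tsum_rpow (p := 1) (by norm_num) (toLp a)
  simp only [ENNReal.toReal_one, Real.rpow_one, div_one, toLp_apply, norm_mul,
    Complex.norm_real, Real.norm_of_nonneg (w.pos _).le] at h
  exact h

lemma summable_coeff (a : WeightedL1 w) : Summable fun k => ‖coeff a k‖ * w k := by
  have h := (lp.memℓp (toLp a)).summable (p := 1) (by norm_num)
  simpa [toLp_apply, Complex.norm_real, abs_of_pos (w.pos _)] using h

lemma coeff_add (a b : WeightedL1 w) : coeff (a + b) = coeff a + coeff b :=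
  funext fun k => add_div (toLp a k) (toLp b k) (w k : ℂ)

lemma coeff_zero : coeff (0 : WeightedL1 w) = 0 :=
  funext fun k => zero_div (w k : ℂ)

lemma coeff_smul (z : ℂ) (a : WeightedL1 w) : coeff (z • a) = z • coeff a :=
  funext fun k => mul_div_assoc z (toLp a k) (w k : ℂ)

instance : Mul (WeightedL1 w) :=
  ⟨fun a b => ofCoeff (conv (coeff a) (coeff b))
    (Weight.summable_norm_conv_mul (summable_coeff a) (summable_coeff b))⟩

lemma coeff_mul (a b : WeightedL1 w) : coeff (a * b) = conv (coeff a) (coeff b) :=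
  coeff_ofCoeff _ _

lemma summable_coeff_mul_coeff (a b : WeightedL1 w) (k : G) :
    Summable fun l => coeff a l * coeff b (k - l) :=
  (Weight.summable_norm_mul_sub (summable_coeff a) (summable_coeff b) k).of_norm

lemma summable_norm_coeff_mul_addChar {ψ : AddChar G ℂ} (hψ : ∀ k, ‖ψ k‖ ≤ w k)
    (a : WeightedL1 w) : Summable fun k => ‖coeff a k * ψ k‖ :=
  .of_nonneg_of_le (fun _ => norm_nonneg _)
    (fun k => (norm_mul _ _).trans_le (mul_le_mul_of_nonneg_left (hψ k) (norm_nonneg _)))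
    (summable_coeff a)

variable [DecidableEq G]

def single (n : G) : WeightedL1 w :=
  ofCoeff (Pi.single n 1) <| (hasSum_pi_single n (w n)).summable.congr fun k => by
    rcases eq_or_ne k n with rfl | h <;> simp [*]

lemma coeff_single (n : G) : coeff (single (w := w) n) = Pi.single n 1 := coeff_ofCoeff _ _

lemma norm_single (n : G) : ‖single (w := w) n‖ = w n := by
  rw [norm_eq_tsum, tsum_eq_single n fun k hk => by simp [coeff_single, hk]]
  simp [coeff_single]

instance : One (WeightedL1 w) := ⟨single 0⟩

lemma coeff_one : coeff (1 : WeightedL1 w) = Pi.single 0 1 := coeff_single 0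

instance : CommRing (WeightedL1 w) where
  __ := (inferInstance : AddCommGroup (WeightedL1 w))
  left_distrib a b c := coeff_injective <| funext fun k => by
    simp only [coeff_mul, coeff_add, Pi.add_apply]
    exact conv_add k (summable_coeff_mul_coeff a b k) (summable_coeff_mul_coeff a c k)
  right_distrib a b c := coeff_injective <| funext fun k => by
    simp only [coeff_mul, coeff_add, Pi.add_apply, conv_comm _ (coeff c)]
    exact conv_add k (summable_coeff_mul_coeff c a k) (summable_coeff_mul_coeff c b k)
  zero_mul a := coeff_injective <| by rw [coeff_mul, coeff_zero, zero_conv]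
  mul_zero a := coeff_injective <| by rw [coeff_mul, coeff_zero, conv_comm, zero_conv]
  mul_assoc a b c := coeff_injective <| funext fun k => by
    simp only [coeff_mul]
    exact conv_assoc k (Weight.summable_mul_mul_sub_sub (summable_coeff a) (summable_coeff b)
      (summable_coeff c) k)
  one_mul a := coeff_injective <| by rw [coeff_mul, coeff_one, conv_single_zero_left]
  mul_one a := coeff_injective <| by rw [coeff_mul, coeff_one, conv_comm, conv_single_zero_left]
  mul_comm a b := coeff_injective <| by rw [coeff_mul, coeff_mul, conv_comm]

instance : NormedCommRing (WeightedL1 w) where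
  __ := (inferInstance : NormedAddCommGroup (WeightedL1 w))
  __ := (inferInstance : CommRing (WeightedL1 w))
  norm_mul_le a b := by
    simpa only [norm_eq_tsum, coeff_mul] using
      Weight.tsum_norm_conv_mul_le (summable_coeff a) (summable_coeff b)

instance : NormedAlgebra ℂ (WeightedL1 w) where
  __ := Algebra.ofModule
    (fun z a b => coeff_injective <| by simp only [coeff_mul, coeff_smul, conv_smul])
    (fun z a b => coeff_injective <| by
      simp only [coeff_mul, coeff_smul, conv_comm (coeff a), conv_smul])
  norm_smul_le := norm_smul_le

instance : Nontrivial (WeightedL1 w) :=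
  ⟨0, 1, fun h => by simpa [coeff_zero, coeff_one] using congr_fun (congrArg coeff h) 0⟩

lemma single_add (m n : G) : single (w := w) (m + n) = single m * single n :=
  coeff_injective <| by rw [coeff_mul, coeff_single, coeff_single, coeff_single,
    conv_single_single, one_mul]

lemma hasSum_coeff_smul_single (a : WeightedL1 w) : HasSum (fun k => coeff a k • single k) a := by
  have h (k : G) : coeff a k • single (w := w) k = (lp.single 1 k (toLp a k) : WeightedL1 w) := by
    refine coeff_injective (funext fun j => ?_)
    rw [coeff_smul, coeff_single]
    change _ = (Pi.single k (toLp a k) : G → ℂ) j / _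
    rcases eq_or_ne j k with rfl | hj
    · simp [coeff]
    · simp [hj]
  simp only [h]
  exact lp.hasSum_single ENNReal.one_ne_top (toLp a)

lemma algHom_apply_eq_tsum (φ : WeightedL1 w →ₐ[ℂ] ℂ) (a : WeightedL1 w) :
    φ a = ∑' k, coeff a k * φ (single k) := by
  simpa using ((hasSum_coeff_smul_single a).map φ (map_continuous φ)).tsum_eq.symm

def evalAlgHom (ψ : AddChar G ℂ) (hψ : ∀ k, ‖ψ k‖ ≤ w k) : WeightedL1 w →ₐ[ℂ] ℂ :=
  AlgHom.ofLinearMap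
    { toFun a := ∑' k, coeff a k * ψ k
      map_add' a b := by
        simp only [coeff_add, Pi.add_apply, add_mul]
        exact (summable_norm_coeff_mul_addChar hψ a).of_norm.tsum_add
          (summable_norm_coeff_mul_addChar hψ b).of_norm
      map_smul' z a := by
        simp only [coeff_smul, Pi.smul_apply, smul_eq_mul, mul_assoc, tsum_mul_left,
          RingHom.id_apply] }
    (by
      change ∑' k, coeff 1 k * ψ k = 1
      rw [coeff_one, tsum_eq_single 0 fun k hk => by simp [hk]]
      simp)
    (fun a b => by
      change ∑' k, coeff (a * b) k * ψ k = (∑' k, coeff a k * ψ k) * ∑' k, coeff b k * ψ k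
      simp only [coeff_mul, conv_mul_addChar]
      exact (hasSum_conv (summable_norm_coeff_mul_addChar hψ a)
        (summable_norm_coeff_mul_addChar hψ b)).tsum_eq)

lemma evalAlgHom_apply (ψ : AddChar G ℂ) (hψ : ∀ k, ‖ψ k‖ ≤ w k) (a : WeightedL1 w) :
    evalAlgHom ψ hψ a = ∑' k, coeff a k * ψ k := rfl

def algHomAddChar (φ : WeightedL1 w →ₐ[ℂ] ℂ) : AddChar G ℂ where
  toFun n := φ (single n)
  map_zero_eq_one' := map_one φ
  map_add_eq_mul' m n := by rw [single_add, map_mul]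

lemma norm_algHomAddChar_le (φ : WeightedL1 w →ₐ[ℂ] ℂ) (n : G) :
    ‖algHomAddChar φ n‖ ≤ w n :=
  (norm_algHom_apply_le φ (single n)).trans_eq (norm_single n)

lemma eq_evalAlgHom (φ : WeightedL1 w →ₐ[ℂ] ℂ) :
    φ = evalAlgHom (algHomAddChar φ) (norm_algHomAddChar_le φ) :=
  AlgHom.ext (algHom_apply_eq_tsum φ)

lemma isUnit_of_forall_evalAlgHom_ne_zero {a : WeightedL1 w}
    (ha : ∀ ψ hψ, evalAlgHom ψ hψ a ≠ 0) : IsUnit a := by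
  by_contra hna
  obtain ⟨χ, hχ⟩ := WeakDual.CharacterSpace.exists_apply_eq_zero hna
  set φ := WeakDual.CharacterSpace.equivAlgHom χ
  refine ha (algHomAddChar φ) (norm_algHomAddChar_le φ) ?_
  rw [← eq_evalAlgHom φ]
  exact hχ

end WeightedL1

lemma le_one_of_pow_le {x : ℝ} (hx : 0 ≤ x) {g : ℕ → ℝ} (hle : ∀ n, x ^ n ≤ g n)
    (hg : Tendsto (fun n : ℕ => g n ^ (n : ℝ)⁻¹) atTop (𝓝 1)) : x ≤ 1 := by
  refine ge_of_tendsto hg (eventually_ne_atTop 0 |>.mono fun n hn => ?_)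
  calc x = (x ^ n) ^ (n : ℝ)⁻¹ := (Real.pow_rpow_inv_natCast hx hn).symm
    _ ≤ g n ^ (n : ℝ)⁻¹ := Real.rpow_le_rpow (by positivity) (hle n) (by positivity)

lemma one_le_of_le_mul_of_tendsto {v : ℕ → ℝ} (hpos : ∀ n, 0 < v n)
    (hmul : ∀ m n, v (m + n) ≤ v m * v n)
    (hv : Tendsto (fun n : ℕ => v n ^ (n : ℝ)⁻¹) atTop (𝓝 1)) (n : ℕ) : 1 ≤ v n := by
  have hsub : Subadditive fun n => Real.log (v n) := fun m n => by
    rw [← Real.log_mul (hpos m).ne' (hpos n).ne']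
    exact Real.log_le_log (hpos _) (hmul m n)
  have hlog : Tendsto (fun n : ℕ => Real.log (v n) / n) atTop (𝓝 0) := by
    simpa [Real.log_rpow (hpos _), div_eq_inv_mul] using hv.log one_ne_zero
  -- Fekete: `log v n / n` converges to its infimum, which the hypothesis identifies as `0`.
  have hlim : hsub.lim = 0 := tendsto_nhds_unique (hsub.tendsto_lim hlog.bddBelow_range) hlog
  rcases eq_or_ne n 0 with rfl | hn
  · exact le_of_mul_le_mul_left (by simpa using hmul 0 0) (hpos 0)
  · have := hlim ▸ hsub.lim_le_div hlog.bddBelow_range hn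
    rw [← Real.log_nonneg_iff (hpos n)]
    simpa using (le_div_iff₀ (Nat.cast_pos.2 (Nat.pos_of_ne_zero hn))).1 this

lemma Weight.one_le (w : Weight ℤ)
    (hplus : Tendsto (fun n : ℕ => w n ^ (n : ℝ)⁻¹) atTop (𝓝 1))
    (hminus : Tendsto (fun n : ℕ => w (-n) ^ (n : ℝ)⁻¹) atTop (𝓝 1)) (k : ℤ) : 1 ≤ w k := by
  obtain ⟨n, rfl | rfl⟩ := k.eq_nat_or_neg
  · exact one_le_of_le_mul_of_tendsto (fun n => w.pos n)
      (fun m n => by rw [Nat.cast_add]; exact w.le_mul _ _) hplus n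
  · exact one_le_of_le_mul_of_tendsto (fun n => w.pos (-n))
      (fun m n => by rw [Nat.cast_add, neg_add]; exact w.le_mul _ _) hminus n

def expChar (t : ℝ) : AddChar ℤ ℂ where
  toFun k := Complex.exp (2 * Real.pi * Complex.I * k * t)
  map_zero_eq_one' := by simp
  map_add_eq_mul' m n := by
    rw [← Complex.exp_add]
    push_cast
    ring_nf

lemma expChar_apply (t : ℝ) (k : ℤ) :
    expChar t k = Complex.exp (2 * Real.pi * Complex.I * k * t) := rfl

lemma norm_expChar (t : ℝ) (k : ℤ) : ‖expChar t k‖ = 1 := by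
  rw [expChar_apply, show 2 * Real.pi * Complex.I * k * t =
    ((2 * Real.pi * k * t : ℝ) : ℂ) * Complex.I by push_cast; ring, Complex.norm_exp_ofReal_mul_I]

lemma exists_eq_expChar (w : Weight ℤ)
    (hplus : Tendsto (fun n : ℕ => w n ^ (n : ℝ)⁻¹) atTop (𝓝 1))
    (hminus : Tendsto (fun n : ℕ => w (-n) ^ (n : ℝ)⁻¹) atTop (𝓝 1))
    (ψ : AddChar ℤ ℂ) (hψ : ∀ k, ‖ψ k‖ ≤ w k) : ∃ t, ψ = expChar t := by
  have hle : ‖ψ 1‖ ≤ 1 := le_one_of_pow_le (norm_nonneg _) (fun n => by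
    rw [← norm_pow, ← AddChar.map_nsmul_eq_pow, nsmul_one]; exact hψ n) hplus
  have hle' : ‖ψ (-1)‖ ≤ 1 := le_one_of_pow_le (norm_nonneg _) (fun n => by
    rw [← norm_pow, ← AddChar.map_nsmul_eq_pow, smul_neg, nsmul_one]; exact hψ (-n)) hminus
  have hmul : ‖ψ 1‖ * ‖ψ (-1)‖ = 1 := by
    rw [← norm_mul, ← AddChar.map_add_eq_mul, add_neg_cancel, AddChar.map_zero_eq_one, norm_one]
  obtain ⟨θ, hθ⟩ := (Complex.norm_eq_one_iff (ψ 1)).1 <|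
    le_antisymm hle (by nlinarith [mul_le_mul_of_nonneg_left hle' (norm_nonneg (ψ 1))])
  refine ⟨θ / (2 * Real.pi), ?_⟩
  ext k
  have hk : ψ k = ψ 1 ^ k := by simpa using ψ.map_zsmul_eq_zpow k 1
  rw [hk, expChar_apply, ← hθ, ← Complex.exp_int_mul]
  congr 1
  push_cast
  field_simp

end WienerAlgebra

open WienerAlgebra WeightedL1

/-- Inverse-closedness of the weighted Wiener algebra under the
Gelfand–Raikov–Shilov condition. -/
theorem wiener_algebra_inverse
    (w : ℤ → ℝ) (hw_pos : ∀ k, 0 < w k)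
    (hw_sub : ∀ k l, w (k + l) ≤ w k * w l)
    (hGRS_plus : Filter.Tendsto (fun n : ℕ => (w (n : ℤ)) ^ ((n : ℝ)⁻¹))
      Filter.atTop (nhds 1))
    (hGRS_minus : Filter.Tendsto (fun n : ℕ => (w (-(n : ℤ))) ^ ((n : ℝ)⁻¹))
      Filter.atTop (nhds 1))
    (c : ℤ → ℂ) (hc : Summable (fun k => ‖c k‖ * w k))
    (f : ℝ → ℂ)
    (hf : ∀ t : ℝ, f t = ∑' k : ℤ, c k * Complex.exp (2 * Real.pi * Complex.I * (k : ℂ) * (t : ℂ)))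
    (hne : ∀ t : ℝ, f t ≠ 0) :
    ∃ b : ℤ → ℂ, Summable (fun k => ‖b k‖ * w k) ∧
      ∀ t : ℝ, (∑' k : ℤ, b k * Complex.exp (2 * Real.pi * Complex.I * (k : ℂ) * (t : ℂ))) * f t = 1 := by
  let W : Weight ℤ := ⟨w, hw_pos, hw_sub⟩
  have hexp (t : ℝ) (k : ℤ) : ‖expChar t k‖ ≤ W k :=
    (norm_expChar t k).trans_le (W.one_le hGRS_plus hGRS_minus k)
  let a : WeightedL1 W := ofCoeff c hc
  have heval (t : ℝ) : evalAlgHom (expChar t) (hexp t) a = f t := by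
    rw [evalAlgHom_apply, coeff_ofCoeff, hf]
    rfl
  obtain ⟨u, hu⟩ := (isUnit_of_forall_evalAlgHom_ne_zero fun ψ hψ => by
    obtain ⟨t, rfl⟩ := exists_eq_expChar W hGRS_plus hGRS_minus ψ hψ
    exact heval t ▸ hne t).exists_left_inv
  refine ⟨coeff u, summable_coeff u, fun t => ?_⟩
  rw [← heval t]
  change evalAlgHom (expChar t) (hexp t) u * _ = 1
  rw [← map_mul, hu, map_one]
end
end

section
/- Let L be a self-adjoint, positive definite Laurent operator on ℓ²(ℤ) whose symbol f(ω) = Σ_k A_k e^{2πikω} has coefficients satisfying Σ_k |A_k| w(k) < ∞ for a weight w satisfying the GRS-condition. Then the inverse operator L⁻¹ is also a Laurent operator whose coefficients B_k satisfy Σ_k |B_k| w(k) < ∞. -/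
/-!
The sequences `a` with `∑ ‖a k‖ w k < ∞` form a commutative Banach algebra under convolution,
the Beurling algebra `ℓ¹_w(ℤ)`. By Gelfand theory an element on which no character vanishes is
invertible. A character `ψ` is determined by `z = ψ δ₁`, and the GRS condition forces `|z| = 1`:
`|z| ^ n ≤ ‖δₙ‖ ‖1‖ = w n * w 0`, and likewise for `z⁻¹`. Writing `z = e^{2πit}`, `ψ` is evaluation
of the Fourier series at `t`, so a nowhere vanishing symbol makes `A` invertible in `ℓ¹_w(ℤ)`, and
the coefficients of its inverse are the `B`.
-/

open Filter Topology

section lpOne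

variable {α : Type*} {E : α → Type*} [∀ i, NormedAddCommGroup (E i)]

lemma memℓp_one_iff {f : ∀ i, E i} : Memℓp f 1 ↔ Summable fun i => ‖f i‖ := by
  rw [memℓp_gen_iff (by norm_num)]; simp only [ENNReal.toReal_one, Real.rpow_one]

lemma lp.norm_eq_tsum_norm (f : lp E 1) : ‖f‖ = ∑' i, ‖f i‖ := by
  rw [lp.norm_eq_tsum_rpow (by norm_num)]; simp only [ENNReal.toReal_one, Real.rpow_one, div_one]

end lpOne

lemma tendsto_const_rpow_inv_natCast {C : ℝ} (hC : 0 < C) :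
    Tendsto (fun n : ℕ => C ^ (n : ℝ)⁻¹) atTop (𝓝 1) := by
  simpa using tendsto_const_nhds.rpow
    (tendsto_inv_atTop_zero.comp tendsto_natCast_atTop_atTop) (Or.inl hC.ne')

lemma tendsto_rpow_inv_comp_mul {u : ℕ → ℝ} (hu0 : ∀ n, 0 < u n)
    (hu : Tendsto (fun n : ℕ => u n ^ (n : ℝ)⁻¹) atTop (𝓝 1)) (N : ℕ) :
    Tendsto (fun n : ℕ => u (n * N) ^ (n : ℝ)⁻¹) atTop (𝓝 1) := by
  rcases N.eq_zero_or_pos with rfl | hN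
  · simpa using tendsto_const_rpow_inv_natCast (hu0 0)
  have hmul : Tendsto (· * N) atTop atTop :=
    tendsto_atTop_mono (fun n => Nat.le_mul_of_pos_right n hN) tendsto_id
  convert (hu.comp hmul).pow N using 1
  · ext n
    rw [Function.comp_apply, ← Real.rpow_natCast, ← Real.rpow_mul (hu0 _).le, Nat.cast_mul,
      mul_inv, mul_assoc, inv_mul_cancel₀ (by exact_mod_cast hN.ne'), mul_one]
  · simp

lemma le_one_of_pow_le_mul_of_tendsto {x C : ℝ} {u : ℕ → ℝ} (hx : 0 ≤ x) (hC : 0 < C)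
    (hle : ∀ n, x ^ n ≤ u n * C) (hu : Tendsto (fun n : ℕ => u n ^ (n : ℝ)⁻¹) atTop (𝓝 1)) :
    x ≤ 1 := by
  refine ge_of_tendsto (by simpa using hu.mul (tendsto_const_rpow_inv_natCast hC)) ?_
  filter_upwards [eventually_ne_atTop 0] with n hn
  have hun : 0 ≤ u n := nonneg_of_mul_nonneg_left ((pow_nonneg hx n).trans (hle n)) hC
  calc x = (x ^ n) ^ (n : ℝ)⁻¹ := by
        rw [← Real.rpow_natCast, ← Real.rpow_mul hx, mul_inv_cancel₀ (by exact_mod_cast hn),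
          Real.rpow_one]
    _ ≤ (u n * C) ^ (n : ℝ)⁻¹ := by gcongr; exact hle n
    _ = u n ^ (n : ℝ)⁻¹ * C ^ (n : ℝ)⁻¹ := Real.mul_rpow hun hC.le

structure SubmultiplicativeWeight (G : Type*) [Add G] where
  toFun : G → ℝ
  pos : ∀ g, 0 < toFun g
  map_add_le : ∀ g h, toFun (g + h) ≤ toFun g * toFun h

namespace SubmultiplicativeWeight

variable {G : Type*} [AddCommGroup G] (W : SubmultiplicativeWeight G)

instance : CoeFun (SubmultiplicativeWeight G) fun _ => G → ℝ := ⟨toFun⟩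

lemma nonneg (g : G) : 0 ≤ W g := (W.pos g).le

@[simp] lemma abs_apply (g : G) : |W g| = W g := abs_of_pos (W.pos g)

def IsGRS : Prop := ∀ g, Tendsto (fun n : ℕ => W (n • g) ^ (n : ℝ)⁻¹) atTop (𝓝 1)

lemma map_succ_nsmul_le (n : ℕ) (g : G) : W ((n + 1) • g) ≤ W g ^ (n + 1) := by
  induction n with
  | zero => simp
  | succ n ih =>
    calc W ((n + 1 + 1) • g) ≤ W ((n + 1) • g) * W g := by
          rw [succ_nsmul]; exact W.map_add_le _ _
      _ ≤ W g ^ (n + 1) * W g := by gcongr; exact W.nonneg g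
      _ = W g ^ (n + 1 + 1) := (pow_succ _ _).symm

lemma IsGRS.one_le {W : SubmultiplicativeWeight G} (hW : W.IsGRS) (g : G) : 1 ≤ W g := by
  refine le_of_tendsto' ((hW g).comp (tendsto_add_atTop_nat 1)) fun n => ?_
  have hn : ((n + 1 : ℕ) : ℝ) ≠ 0 := by positivity
  calc W ((n + 1) • g) ^ ((n + 1 : ℕ) : ℝ)⁻¹ ≤ (W g ^ (n + 1)) ^ ((n + 1 : ℕ) : ℝ)⁻¹ :=
        Real.rpow_le_rpow (W.nonneg _) (W.map_succ_nsmul_le n g) (by positivity)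
    _ = W g := by
        rw [← Real.rpow_natCast, ← Real.rpow_mul (W.nonneg g), mul_inv_cancel₀ hn, Real.rpow_one]

def beurlingSubmodule : Submodule ℂ (G → ℂ) where
  carrier := {a | Summable fun g => ‖a g‖ * W g}
  add_mem' {a b} ha hb :=
    (ha.add hb).of_nonneg_of_le (fun g => mul_nonneg (norm_nonneg _) (W.nonneg g)) fun g => by
      rw [← add_mul]; gcongr; exacts [W.nonneg g, norm_add_le _ _]
  zero_mem' := by simp
  smul_mem' c a ha := by simpa [norm_mul, mul_assoc] using ha.mul_left ‖c‖

end SubmultiplicativeWeight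

noncomputable section

variable {G : Type*} [AddCommGroup G]

lemma hasSum_convolution_prod_of_nonneg {u v : G → ℝ} (hu0 : ∀ g, 0 ≤ u g) (hv0 : ∀ g, 0 ≤ v g)
    (hu : Summable u) (hv : Summable v) :
    HasSum (fun q : G × G => u q.2 * v (q.1 - q.2)) ((∑' g, u g) * ∑' g, v g) := by
  let e : G × G ≃ G × G := (Equiv.prodShear (Equiv.refl G) Equiv.addLeft).trans (Equiv.prodComm G G)
  have huv := hu.mul_of_nonneg hv hu0 hv0
  rw [hu.tsum_mul_tsum hv huv, ← e.hasSum_iff]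
  convert huv.hasSum using 2 with q
  simp [e]

/-- A type synonym, so that the subspace topology of `G → ℂ` does not compete with the norm. -/
def BeurlingAlgebra (W : SubmultiplicativeWeight G) : Type _ := W.beurlingSubmodule

namespace BeurlingAlgebra

variable {W : SubmultiplicativeWeight G}

instance : AddCommGroup (BeurlingAlgebra W) := inferInstanceAs (AddCommGroup W.beurlingSubmodule)

instance : Module ℂ (BeurlingAlgebra W) := inferInstanceAs (Module ℂ W.beurlingSubmodule)

instance : FunLike (BeurlingAlgebra W) G ℂ where
  coe a := a.1
  coe_injective _ _ := Subtype.ext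

@[ext] lemma ext {a b : BeurlingAlgebra W} (h : ∀ g, a g = b g) : a = b := DFunLike.ext _ _ h

lemma summable (a : BeurlingAlgebra W) : Summable fun g => ‖a g‖ * W g := a.2

def mk (a : G → ℂ) (ha : Summable fun g => ‖a g‖ * W g) : BeurlingAlgebra W := ⟨a, ha⟩

@[simp] lemma zero_apply (g : G) : (0 : BeurlingAlgebra W) g = 0 := rfl
@[simp] lemma add_apply (a b : BeurlingAlgebra W) (g : G) : (a + b) g = a g + b g := rfl
@[simp] lemma smul_apply (c : ℂ) (a : BeurlingAlgebra W) (g : G) : (c • a) g = c * a g := rfl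

def toLp : BeurlingAlgebra W ≃ₗ[ℂ] lp (fun _ : G => ℂ) 1 where
  toFun a := ⟨fun g => a g * W g, memℓp_one_iff.2 <| by simpa using a.summable⟩
  map_add' a b := lp.ext <| funext fun g => add_mul (a g) (b g) _
  map_smul' c a := lp.ext <| funext fun g => mul_assoc c (a g) _
  invFun x := mk (fun g => x g / W g) <| (memℓp_one_iff.1 (lp.memℓp x)).congr fun g => by
    rw [norm_div, Complex.norm_real, Real.norm_of_nonneg (W.nonneg g),
      div_mul_cancel₀ _ (W.pos g).ne']
  left_inv a := ext fun g => mul_div_cancel_right₀ _ (by exact_mod_cast (W.pos g).ne')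
  right_inv x := lp.ext <| funext fun g => div_mul_cancel₀ _ (by exact_mod_cast (W.pos g).ne')

instance : NormedAddCommGroup (BeurlingAlgebra W) :=
  NormedAddCommGroup.induced _ _ (toLp (W := W)) toLp.injective

instance : NormedSpace ℂ (BeurlingAlgebra W) := NormedSpace.induced ℂ _ _ (toLp (W := W))

lemma norm_def (a : BeurlingAlgebra W) : ‖a‖ = ∑' g, ‖a g‖ * W g := by
  change ‖toLp a‖ = _
  simp [lp.norm_eq_tsum_norm, toLp]

def toLpₗᵢ : BeurlingAlgebra W ≃ₗᵢ[ℂ] lp (fun _ : G => ℂ) 1 := ⟨toLp, fun _ => rfl⟩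

instance : CompleteSpace (BeurlingAlgebra W) := toLpₗᵢ.toIsometryEquiv.completeSpace

open scoped Classical in
def single (g : G) (c : ℂ) : BeurlingAlgebra W :=
  mk (Pi.single g c) <| summable_of_ne_finset_zero (s := {g}) fun h hh => by
    simp [Finset.notMem_singleton.1 hh]

open scoped Classical in
lemma single_apply (g : G) (c : ℂ) (h : G) :
    (single g c : BeurlingAlgebra W) h = if h = g then c else 0 :=
  Pi.single_apply g c h

lemma smul_single_one (g : G) (c : ℂ) : c • (single g 1 : BeurlingAlgebra W) = single g c := by
  ext h; simp [single_apply]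

lemma norm_single (g : G) (c : ℂ) : ‖(single g c : BeurlingAlgebra W)‖ = ‖c‖ * W g := by
  rw [norm_def, tsum_eq_single g fun h hh => by simp [single_apply, hh]]
  simp [single_apply]

open scoped Classical in
lemma toLp_single (g : G) (c : ℂ) :
    toLp (single g c : BeurlingAlgebra W) = lp.single 1 g (c * W g) := by
  ext h; by_cases hh : h = g <;> simp [toLp, single_apply, hh]

open scoped Classical in
lemma hasSum_single (a : BeurlingAlgebra W) : HasSum (fun g => single g (a g)) a :=
  toLpₗᵢ.toContinuousLinearEquiv.hasSum'.1 <| by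
    convert lp.hasSum_single ENNReal.one_ne_top (toLp a) using 2 with g
    · exact toLp_single g (a g)
    · rfl

section Dense

variable {E : Type*} [NormedAddCommGroup E] [NormedSpace ℂ E]

lemma hasSum_map_single (φ : BeurlingAlgebra W →L[ℂ] E) (a : BeurlingAlgebra W) :
    HasSum (fun g => a g • φ (single g 1)) (φ a) := by
  simpa [← map_smul, smul_single_one] using (hasSum_single a).mapL φ

lemma ext_single {φ ψ : BeurlingAlgebra W →L[ℂ] E}
    (h : ∀ g, φ (single g 1) = ψ (single g 1)) : φ = ψ :=
  ContinuousLinearMap.ext fun a => (hasSum_map_single φ a).unique <| by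
    simpa only [h] using hasSum_map_single ψ a

end Dense

section Convolution

variable (a b c : BeurlingAlgebra W)

lemma hasSum_weighted_conv :
    HasSum (fun q : G × G => ‖a q.2‖ * W q.2 * (‖b (q.1 - q.2)‖ * W (q.1 - q.2))) (‖a‖ * ‖b‖) := by
  rw [norm_def, norm_def]
  exact hasSum_convolution_prod_of_nonneg (fun g => mul_nonneg (norm_nonneg _) (W.nonneg g))
    (fun g => mul_nonneg (norm_nonneg _) (W.nonneg g)) a.summable b.summable

lemma summable_weighted_conv (g : G) :
    Summable fun h => ‖a h‖ * W h * (‖b (g - h)‖ * W (g - h)) :=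
  (hasSum_weighted_conv a b).summable.prod_factor g

lemma hasSum_tsum_weighted_conv :
    HasSum (fun g => ∑' h, ‖a h‖ * W h * (‖b (g - h)‖ * W (g - h))) (‖a‖ * ‖b‖) :=
  (hasSum_weighted_conv a b).prod_fiberwise fun g => (summable_weighted_conv a b g).hasSum

lemma norm_mul_mul_weight_le (g h : G) :
    ‖a h * b (g - h)‖ * W g ≤ ‖a h‖ * W h * (‖b (g - h)‖ * W (g - h)) := by
  have hW : W g ≤ W h * W (g - h) := by simpa using W.map_add_le h (g - h)
  calc ‖a h * b (g - h)‖ * W g ≤ ‖a h‖ * ‖b (g - h)‖ * (W h * W (g - h)) := by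
        gcongr
        · exact W.nonneg g
        · exact norm_mul_le _ _
    _ = ‖a h‖ * W h * (‖b (g - h)‖ * W (g - h)) := by ring

lemma summable_conv (g : G) : Summable fun h => ‖a h * b (g - h)‖ :=
  ((summable_weighted_conv a b g).div_const (W g)).of_nonneg_of_le (fun _ => norm_nonneg _)
    fun h => (le_div_iff₀ (W.pos g)).2 (norm_mul_mul_weight_le a b g h)

lemma norm_conv_mul_weight_le (g : G) :
    ‖∑' h, a h * b (g - h)‖ * W g ≤ ∑' h, ‖a h‖ * W h * (‖b (g - h)‖ * W (g - h)) :=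
  calc ‖∑' h, a h * b (g - h)‖ * W g ≤ (∑' h, ‖a h * b (g - h)‖) * W g := by
        gcongr
        · exact W.nonneg g
        · exact norm_tsum_le_tsum_norm (summable_conv a b g)
    _ = ∑' h, ‖a h * b (g - h)‖ * W g := (summable_conv a b g).tsum_mul_right _ |>.symm
    _ ≤ _ := Summable.tsum_le_tsum (norm_mul_mul_weight_le a b g)
        ((summable_conv a b g).mul_right _) (summable_weighted_conv a b g)

instance : Mul (BeurlingAlgebra W) where
  mul a b := mk (fun g => ∑' h, a h * b (g - h)) <|
    (hasSum_tsum_weighted_conv a b).summable.of_nonneg_of_le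
      (fun g => mul_nonneg (norm_nonneg _) (W.nonneg g)) (norm_conv_mul_weight_le a b)

lemma mul_apply (g : G) : (a * b) g = ∑' h, a h * b (g - h) := rfl

lemma norm_mul_le' : ‖a * b‖ ≤ ‖a‖ * ‖b‖ := by
  rw [norm_def (a * b)]
  exact hasSum_le (norm_conv_mul_weight_le a b) (a * b).summable.hasSum
    (hasSum_tsum_weighted_conv a b)

lemma mul_comm' : a * b = b * a := by
  ext g
  rw [mul_apply, mul_apply, ← (Equiv.subLeft g).tsum_eq]
  simp [mul_comm]

lemma mul_add' : a * (b + c) = a * b + a * c := by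
  ext g
  simp only [mul_apply, add_apply, mul_add]
  exact (summable_conv a b g).of_norm.tsum_add (summable_conv a c g).of_norm

lemma smul_mul' (z : ℂ) : (z • a) * b = z • (a * b) := by
  ext g
  simp only [mul_apply, smul_apply, mul_assoc, tsum_mul_left]

lemma mul_single_apply (g : G) (z : ℂ) (k : G) :
    (a * single g z : BeurlingAlgebra W) k = a (k - g) * z := by
  rw [mul_apply, tsum_eq_single (k - g) fun h hh => by
    rw [single_apply, if_neg fun e => hh (by rw [← e, sub_sub_cancel]), mul_zero]]
  simp [single_apply]

lemma mul_zero' : a * 0 = 0 := by ext g; simp [mul_apply]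

lemma mul_single_zero_one : a * single 0 1 = a := by ext g; simp [mul_single_apply]

def mulLeft : BeurlingAlgebra W →L[ℂ] BeurlingAlgebra W :=
  LinearMap.mkContinuous
    { toFun := (a * ·)
      map_add' := mul_add' a
      map_smul' z b := by simp only [RingHom.id_apply, mul_comm' a, smul_mul'] }
    ‖a‖ (norm_mul_le' a)

lemma mulLeft_apply : mulLeft a b = a * b := rfl

/-- Both sides are continuous in `c`, so it suffices to take `c = single g 1`. -/
lemma mul_assoc' : a * b * c = a * (b * c) := by
  have : mulLeft (a * b) = (mulLeft a).comp (mulLeft b) := ext_single fun g => by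
    ext k
    simp only [ContinuousLinearMap.comp_apply, mulLeft_apply, mul_single_apply, mul_one]
    rw [mul_apply, mul_apply]
    simp only [mul_single_apply, mul_one, sub_right_comm]
  exact congr($this c)

end Convolution

instance : One (BeurlingAlgebra W) := ⟨single 0 1⟩

instance : CommRing (BeurlingAlgebra W) :=
  { (inferInstance : AddCommGroup (BeurlingAlgebra W)) with
    mul_assoc := mul_assoc'
    one_mul a := by rw [mul_comm']; exact mul_single_zero_one a
    mul_one := mul_single_zero_one
    left_distrib := mul_add'
    right_distrib a b c := by rw [mul_comm', mul_add', mul_comm' c, mul_comm' c]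
    zero_mul a := by rw [mul_comm']; exact mul_zero' a
    mul_zero := mul_zero'
    mul_comm := mul_comm' }

instance : Algebra ℂ (BeurlingAlgebra W) :=
  Algebra.ofModule (fun z a b => smul_mul' a b z) fun z a b => by
    rw [mul_comm', smul_mul', mul_comm']

instance : NormedCommRing (BeurlingAlgebra W) :=
  { (inferInstance : NormedAddCommGroup (BeurlingAlgebra W)),
    (inferInstance : CommRing (BeurlingAlgebra W)) with
    norm_mul_le := norm_mul_le' }

instance : NormedAlgebra ℂ (BeurlingAlgebra W) :=
  { (inferInstance : Algebra ℂ (BeurlingAlgebra W)) with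
    norm_smul_le := norm_smul_le }

lemma one_def : (1 : BeurlingAlgebra W) = single 0 1 := rfl

lemma single_mul_single (g h : G) :
    (single g 1 * single h 1 : BeurlingAlgebra W) = single (g + h) 1 := by
  ext k
  simp only [mul_single_apply, single_apply, mul_one]
  by_cases hk : k = g + h <;> simp [hk, sub_eq_iff_eq_add]

lemma norm_one_eq : ‖(1 : BeurlingAlgebra W)‖ = W 0 := by
  rw [one_def, norm_single, norm_one, one_mul]

def singleAddChar : AddChar G (BeurlingAlgebra W) where
  toFun g := single g 1
  map_zero_eq_one' := rfl
  map_add_eq_mul' g h := (single_mul_single g h).symm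

lemma singleAddChar_apply (g : G) : (singleAddChar g : BeurlingAlgebra W) = single g 1 := rfl

lemma norm_algHom_single_le_one (hW : W.IsGRS) (ψ : BeurlingAlgebra W →ₐ[ℂ] ℂ) (g : G) :
    ‖ψ (single g 1)‖ ≤ 1 := by
  refine le_one_of_pow_le_mul_of_tendsto (norm_nonneg _) (W.pos 0) (fun n => ?_) (hW g)
  calc ‖ψ (single g 1)‖ ^ n = ‖ψ (single (n • g) 1)‖ := by
        rw [← norm_pow, ← map_pow, ← singleAddChar_apply, ← singleAddChar_apply,
          AddChar.map_nsmul_eq_pow]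
    _ ≤ ‖(single (n • g) 1 : BeurlingAlgebra W)‖ * ‖(1 : BeurlingAlgebra W)‖ :=
        AlgHom.norm_apply_le_self_mul_norm_one ψ _
    _ = W (n • g) * W 0 := by rw [norm_single, norm_one_eq, norm_one, one_mul]

lemma norm_algHom_single (hW : W.IsGRS) (ψ : BeurlingAlgebra W →ₐ[ℂ] ℂ) (g : G) :
    ‖ψ (single g 1)‖ = 1 := by
  have hinv : ‖ψ (single g 1)‖ * ‖ψ (single (-g) 1)‖ = 1 := by
    rw [← norm_mul, ← map_mul, single_mul_single, add_neg_cancel, ← one_def, map_one, norm_one]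
  have := norm_algHom_single_le_one hW ψ g
  have := norm_algHom_single_le_one hW ψ (-g)
  nlinarith [norm_nonneg (ψ (single g 1)), norm_nonneg (ψ (single (-g) 1))]

theorem isUnit_of_forall_tsum_mul_addChar_ne_zero (hW : W.IsGRS) (a : BeurlingAlgebra W)
    (ha : ∀ χ : AddChar G ℂ, (∀ g, ‖χ g‖ = 1) → ∑' g, a g * χ g ≠ 0) : IsUnit a := by
  by_contra hna
  obtain ⟨φ, hφ⟩ := WeakDual.CharacterSpace.exists_apply_eq_zero hna
  let ψ := WeakDual.CharacterSpace.equivAlgHom φ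
  refine ha (ψ.toMonoidHom.compAddChar singleAddChar) (norm_algHom_single hW ψ) ?_
  exact (hasSum_map_single ψ.toContinuousLinearMap a).tsum_eq.trans hφ

section FourierEval

variable (χ : AddChar G ℂ)

lemma norm_mul_addChar_le (hχ : ∀ g, ‖χ g‖ = 1) (h1 : ∀ g, 1 ≤ W g) (a : BeurlingAlgebra W)
    (g : G) : ‖a g * χ g‖ ≤ ‖a g‖ * W g := by
  rw [norm_mul, hχ, mul_one]
  exact le_mul_of_one_le_right (norm_nonneg _) (h1 g)

lemma summable_norm_mul_addChar (hχ : ∀ g, ‖χ g‖ = 1) (h1 : ∀ g, 1 ≤ W g) (a : BeurlingAlgebra W) :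
    Summable fun g => ‖a g * χ g‖ :=
  a.summable.of_nonneg_of_le (fun _ => norm_nonneg _) (norm_mul_addChar_le χ hχ h1 a)

def fourierEvalCLM (hχ : ∀ g, ‖χ g‖ = 1) (h1 : ∀ g, 1 ≤ W g) : BeurlingAlgebra W →L[ℂ] ℂ :=
  LinearMap.mkContinuous
    { toFun a := ∑' g, a g * χ g
      map_add' a b := by
        simp only [add_apply, add_mul]
        exact (summable_norm_mul_addChar χ hχ h1 a).of_norm.tsum_add
          (summable_norm_mul_addChar χ hχ h1 b).of_norm
      map_smul' z a := by
        simp only [smul_apply, mul_assoc, tsum_mul_left, RingHom.id_apply, smul_eq_mul] }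
    1 fun a => by
      rw [one_mul, norm_def]
      exact (norm_tsum_le_tsum_norm (summable_norm_mul_addChar χ hχ h1 a)).trans <|
        Summable.tsum_le_tsum (norm_mul_addChar_le χ hχ h1 a)
          (summable_norm_mul_addChar χ hχ h1 a) a.summable

lemma fourierEvalCLM_apply (hχ : ∀ g, ‖χ g‖ = 1) (h1 : ∀ g, 1 ≤ W g) (a : BeurlingAlgebra W) :
    fourierEvalCLM χ hχ h1 a = ∑' g, a g * χ g := rfl

lemma fourierEvalCLM_single (hχ : ∀ g, ‖χ g‖ = 1) (h1 : ∀ g, 1 ≤ W g) (g : G) :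
    fourierEvalCLM χ hχ h1 (single g 1) = χ g := by
  rw [fourierEvalCLM_apply, tsum_eq_single g fun h hh => by simp [single_apply, hh]]
  simp [single_apply]

lemma fourierEvalCLM_mul (hχ : ∀ g, ‖χ g‖ = 1) (h1 : ∀ g, 1 ≤ W g) (a b : BeurlingAlgebra W) :
    fourierEvalCLM χ hχ h1 (a * b) = fourierEvalCLM χ hχ h1 a * fourierEvalCLM χ hχ h1 b := by
  set F := fourierEvalCLM χ hχ h1
  have : F.comp (mulLeft a) = F a • F := ext_single fun g => by
    rw [ContinuousLinearMap.comp_apply, _root_.smul_apply, mulLeft_apply,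
      fourierEvalCLM_single, smul_eq_mul, fourierEvalCLM_apply, ← (Equiv.addRight g).tsum_eq]
    simp only [Equiv.coe_addRight, mul_single_apply, add_sub_cancel_right, mul_one,
      AddChar.map_add_eq_mul, ← mul_assoc]
    exact (summable_norm_mul_addChar χ hχ h1 a).of_norm.tsum_mul_right _
  exact congr($this b)

def fourierEval (hχ : ∀ g, ‖χ g‖ = 1) (h1 : ∀ g, 1 ≤ W g) : BeurlingAlgebra W →ₐ[ℂ] ℂ :=
  AlgHom.ofLinearMap (fourierEvalCLM χ hχ h1).toLinearMap
    (by simp [one_def, fourierEvalCLM_single]) (fourierEvalCLM_mul χ hχ h1)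

end FourierEval

end BeurlingAlgebra

lemma SubmultiplicativeWeight.isGRS_of_tendsto_int (W : SubmultiplicativeWeight ℤ)
    (hplus : Tendsto (fun n : ℕ => W n ^ (n : ℝ)⁻¹) atTop (𝓝 1))
    (hminus : Tendsto (fun n : ℕ => W (-n) ^ (n : ℝ)⁻¹) atTop (𝓝 1)) : W.IsGRS := by
  intro k
  obtain ⟨N, rfl | rfl⟩ := Int.eq_nat_or_neg k
  · simpa using tendsto_rpow_inv_comp_mul (fun n => W.pos n) hplus N
  · simpa using tendsto_rpow_inv_comp_mul (fun n => W.pos (-n)) hminus N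

open Complex

def intFourierChar (t : ℝ) : AddChar ℤ ℂ where
  toFun k := exp (2 * Real.pi * I * k * t)
  map_zero_eq_one' := by simp
  map_add_eq_mul' k l := by rw [← exp_add]; push_cast; ring_nf

lemma intFourierChar_apply (t : ℝ) (k : ℤ) :
    intFourierChar t k = exp (2 * Real.pi * I * k * t) := rfl

lemma norm_intFourierChar (t : ℝ) (k : ℤ) : ‖intFourierChar t k‖ = 1 := by
  rw [intFourierChar_apply,
    show 2 * Real.pi * I * k * t = ((2 * Real.pi * k * t : ℝ) : ℂ) * I by push_cast; ring]
  exact norm_exp_ofReal_mul_I _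

lemma exists_eq_intFourierChar (χ : AddChar ℤ ℂ) (hχ : ∀ k, ‖χ k‖ = 1) :
    ∃ t, χ = intFourierChar t := by
  refine ⟨arg (χ 1) / (2 * Real.pi), AddChar.ext _ _ fun k => ?_⟩
  have h1 : intFourierChar (arg (χ 1) / (2 * Real.pi)) 1 = χ 1 := by
    rw [intFourierChar_apply]
    convert norm_mul_exp_arg_mul_I (χ 1) using 1
    rw [hχ 1]; push_cast; field_simp
  have hk : k = k • (1 : ℤ) := (smul_eq_mul k 1).trans (mul_one k) |>.symm
  rw [hk, AddChar.map_zsmul_eq_zpow, AddChar.map_zsmul_eq_zpow, h1]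

end

theorem laurent_inverse_wiener_general
    (w : ℤ → ℝ) (hw_pos : ∀ k, 0 < w k)
    (hw_sub : ∀ k l, w (k + l) ≤ w k * w l)
    (hGRS_plus : Filter.Tendsto (fun n : ℕ => (w (n : ℤ)) ^ ((n : ℝ)⁻¹))
      Filter.atTop (nhds 1))
    (hGRS_minus : Filter.Tendsto (fun n : ℕ => (w (-(n : ℤ))) ^ ((n : ℝ)⁻¹))
      Filter.atTop (nhds 1))
    (A : ℤ → ℂ) (hA : Summable (fun k => ‖A k‖ * w k))
    (f : ℝ → ℂ)
    (hf : ∀ t : ℝ, f t = ∑' k : ℤ, A k * Complex.exp (2 * Real.pi * Complex.I * (k : ℂ) * (t : ℂ)))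
    -- positive definiteness: the symbol is (real and) strictly positive
    (hpos : ∀ t : ℝ, 0 < (f t).re) :
    ∃ B : ℤ → ℂ, Summable (fun k => ‖B k‖ * w k) ∧
      ∀ t : ℝ, (∑' k : ℤ, B k * Complex.exp (2 * Real.pi * Complex.I * (k : ℂ) * (t : ℂ))) * f t = 1 := by
  let W : SubmultiplicativeWeight ℤ := ⟨w, hw_pos, hw_sub⟩
  have hW : W.IsGRS := W.isGRS_of_tendsto_int hGRS_plus hGRS_minus
  let a : BeurlingAlgebra W := .mk A hA
  let symbol (t : ℝ) :=
    BeurlingAlgebra.fourierEval (intFourierChar t) (norm_intFourierChar t) hW.one_le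
  have hfa (t : ℝ) : f t = symbol t a := hf t
  have ha : IsUnit a := BeurlingAlgebra.isUnit_of_forall_tsum_mul_addChar_ne_zero hW a
    fun χ hχ => by
      obtain ⟨t, rfl⟩ := exists_eq_intFourierChar χ hχ
      intro h
      have : f t = 0 := (hfa t).trans h
      simpa [this] using hpos t
  obtain ⟨b, hb⟩ := ha.exists_left_inv
  refine ⟨b, b.summable, fun t => ?_⟩
  change symbol t b * f t = 1
  rw [hfa t, ← map_mul, hb, map_one]

/-- The inverse of a self-adjoint positive definite Laurent operator whose
symbol has coefficients in the weighted Wiener class (with GRS weight) again has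
coefficients in the same weighted class. -/
theorem laurent_inverse_wiener
    (w : ℤ → ℝ) (hw_pos : ∀ k, 0 < w k)
    (hw_sub : ∀ k l, w (k + l) ≤ w k * w l)
    (hGRS_plus : Filter.Tendsto (fun n : ℕ => (w (n : ℤ)) ^ ((n : ℝ)⁻¹))
      Filter.atTop (nhds 1))
    (hGRS_minus : Filter.Tendsto (fun n : ℕ => (w (-(n : ℤ))) ^ ((n : ℝ)⁻¹))
      Filter.atTop (nhds 1))
    (A : ℤ → ℂ) (hA : Summable (fun k => ‖A k‖ * w k))
    (f : ℝ → ℂ)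
    (hf : ∀ t : ℝ, f t = ∑' k : ℤ, A k * Complex.exp (2 * Real.pi * Complex.I * (k : ℂ) * (t : ℂ)))
    -- self-adjointness of the Laurent operator
    (hsa : ∀ k, A (-k) = starRingEnd ℂ (A k))
    -- positive definiteness: the symbol is (real and) strictly positive
    (hpos : ∀ t : ℝ, 0 < (f t).re) :
    ∃ B : ℤ → ℂ, Summable (fun k => ‖B k‖ * w k) ∧
      ∀ t : ℝ, (∑' k : ℤ, B k * Complex.exp (2 * Real.pi * Complex.I * (k : ℂ) * (t : ℂ))) * f t = 1 :=
  laurent_inverse_wiener_general w hw_pos hw_sub hGRS_plus hGRS_minus A hA f hf hpos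
end

section
/- (Lemma of Kantorovich) Let {K_n} be a sequence of invertible bounded operators on a Banach space B such that there exist constants 0 < C₁, C₂ < ∞ with C₁‖f‖ ≤ ‖K_n f‖ ≤ C₂‖f‖ for all n and all f ∈ B. Then {K_n} converges in the strong operator topology to an invertible operator K if and only if {K_n⁻¹} converges in the strong operator topology, and in that case lim(K_n⁻¹) = (lim K_n)⁻¹. -/
open Filter

lemma kantorovich_key {B : Type*} [NormedAddCommGroup B] [NormedSpace ℂ B]
    (K : ℕ → B ≃L[ℂ] B) (C : ℝ) (hC : 0 < C)
    (hb : ∀ (n : ℕ) (f : B), C * ‖f‖ ≤ ‖K n f‖) (Klim : B ≃L[ℂ] B)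
    (h : ∀ f : B, Tendsto (fun n => K n f) atTop (nhds (Klim f))) :
    ∀ f : B, Tendsto (fun n => (K n).symm f) atTop (nhds (Klim.symm f)) := by
  have hinv : ∀ (n : ℕ) (x : B), ‖(K n).symm x‖ ≤ C⁻¹ * ‖x‖ := by
    intro n x
    have h1 := hb n ((K n).symm x)
    rw [(K n).apply_symm_apply] at h1
    rw [le_inv_mul_iff₀ hC]
    linarith
  intro g
  set h0 := Klim.symm g with hh0
  have hg : g = Klim h0 := by rw [hh0, Klim.apply_symm_apply]
  rw [tendsto_iff_norm_sub_tendsto_zero]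
  apply squeeze_zero (fun n => norm_nonneg _) (g := fun n => C⁻¹ * ‖Klim h0 - K n h0‖)
  · intro n
    have heq : (K n).symm g - h0 = (K n).symm (Klim h0 - K n h0) := by
      rw [map_sub, (K n).symm_apply_apply, hg]
    rw [heq]
    exact hinv n _
  · have : Tendsto (fun n => ‖Klim h0 - K n h0‖) atTop (nhds 0) := by
      have := (h h0).const_sub (Klim h0)
      rw [sub_self] at this
      simpa using this.norm
    simpa using this.const_mul C⁻¹

/-- Lemma of Kantorovich. -/
theorem kantorovich_lemma {B : Type*} [NormedAddCommGroup B] [NormedSpace ℂ B]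
    [CompleteSpace B]
    (K : ℕ → B ≃L[ℂ] B) (C₁ C₂ : ℝ) (hC₁ : 0 < C₁) (hC₂ : 0 < C₂)
    (hbound : ∀ (n : ℕ) (f : B), C₁ * ‖f‖ ≤ ‖K n f‖ ∧ ‖K n f‖ ≤ C₂ * ‖f‖) :
    ((∃ Klim : B ≃L[ℂ] B,
        ∀ f : B, Tendsto (fun n => K n f) atTop (nhds (Klim f))) ↔
      (∃ Llim : B ≃L[ℂ] B,
        ∀ f : B, Tendsto (fun n => (K n).symm f) atTop (nhds (Llim f)))) ∧
    (∀ Klim : B ≃L[ℂ] B,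
      (∀ f : B, Tendsto (fun n => K n f) atTop (nhds (Klim f))) →
      ∀ f : B, Tendsto (fun n => (K n).symm f) atTop (nhds (Klim.symm f))) := by
  have hlow : ∀ (n : ℕ) (f : B), C₁ * ‖f‖ ≤ ‖K n f‖ := fun n f => (hbound n f).1
  have hlow' : ∀ (n : ℕ) (f : B), C₂⁻¹ * ‖f‖ ≤ ‖(K n).symm f‖ := by
    intro n f
    have h1 := (hbound n ((K n).symm f)).2
    rw [(K n).apply_symm_apply] at h1
    rw [inv_mul_le_iff₀ hC₂] at *
    linarith [h1]
  refine ⟨⟨?_, ?_⟩, fun Klim h => kantorovich_key K C₁ hC₁ hlow Klim h⟩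
  · rintro ⟨Klim, h⟩
    exact ⟨Klim.symm, kantorovich_key K C₁ hC₁ hlow Klim h⟩
  · rintro ⟨Llim, h⟩
    refine ⟨Llim.symm, ?_⟩
    have := kantorovich_key (fun n => (K n).symm) C₂⁻¹ (by positivity) hlow' Llim h
    simpa using this
end

section
/- If g ∈ L²(ℝ) satisfies |g(t)| ≤ C e^{-λ|t|} for all t, then for every λ₁ < λ there is a constant C₁ such that the short-time Fourier transform satisfies |(V_g g)(t,ω)| ≤ C₁ e^{-λ₁|t|} for all t, ω ∈ ℝ. -/
/-!
Since `|(x - t) - x| = |t|`, the triangle inequality lets one trade part of the decay of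
`g x * conj (g (x - t))` in `x` for decay in `t`: for `0 ≤ l < λ`,
`e^{-λ|x|} e^{-λ|x - t|} ≤ e^{-l|t|} e^{-(λ - l)|x|}`. Integrating this majorant in `x` bounds the
STFT and gives `|V_g g (t, ω)| ≲ e^{-l|t|}`,
and `l = max λ₁ 0` gives the claim.
-/

open MeasureTheory Real Set

noncomputable section

/-- `stft f g t ω` is `(V_g f)(t, ω)`. -/
def stft (f g : ℝ → ℂ) (t ω : ℝ) : ℂ :=
  ∫ x : ℝ, f x * starRingEnd ℂ (g (x - t)) *
    Complex.exp (-2 * Real.pi * Complex.I * (x : ℂ) * (ω : ℂ))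

lemma integrable_exp_neg_mul_abs {b : ℝ} (hb : 0 < b) :
    Integrable fun x : ℝ => exp (-b * |x|) := by
  have hIoi : IntegrableOn (fun x : ℝ => exp (-b * |x|)) (Ioi 0) :=
    (exp_neg_integrableOn_Ioi 0 hb).congr_fun (fun x hx => by rw [abs_of_pos hx])
      measurableSet_Ioi
  have hIic : IntegrableOn (fun x : ℝ => exp (-b * |x|)) (Iic 0) := by
    rw [← Measure.map_neg_eq_self (volume : Measure ℝ),
      measurableEmbedding_neg.integrableOn_map_iff]
    simp_rw [Function.comp_def, abs_neg, neg_preimage, neg_Iic, neg_zero]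
    exact (integrableOn_Ici_iff_integrableOn_Ioi).mpr hIoi
  simpa [Iic_union_Ioi] using hIic.union hIoi

lemma norm_cexp_neg_two_pi_I_mul (x ω : ℝ) :
    ‖Complex.exp (-2 * Real.pi * Complex.I * (x : ℂ) * (ω : ℂ))‖ = 1 := by
  rw [Complex.norm_exp]
  simp

lemma norm_stft_le {f g : ℝ → ℂ} {t : ℝ} {F : ℝ → ℝ} (hF : Integrable F)
    (hfg : ∀ x, ‖f x‖ * ‖g (x - t)‖ ≤ F x) (ω : ℝ) :
    ‖stft f g t ω‖ ≤ ∫ x, F x := by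
  refine norm_integral_le_of_norm_le hF (.of_forall fun x => ?_)
  rw [norm_mul, norm_mul, RCLike.norm_conj, norm_cexp_neg_two_pi_I_mul, mul_one]
  exact hfg x

lemma exp_neg_mul_abs_mul_exp_neg_mul_abs_sub_le {lam l : ℝ} (hl : 0 ≤ l) (hlam : l ≤ lam)
    (x t : ℝ) :
    exp (-lam * |x|) * exp (-lam * |x - t|) ≤ exp (-l * |t|) * exp (-(lam - l) * |x|) := by
  rw [← exp_add, ← exp_add, exp_le_exp]
  have htriangle : |t| ≤ |x| + |x - t| := by
    simpa using abs_sub x (x - t)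
  nlinarith [abs_nonneg x, abs_nonneg (x - t)]

lemma norm_stft_le_of_exp_decay {f g : ℝ → ℂ} {Cf Cg lam l : ℝ} (hl : 0 ≤ l) (hlam : l < lam)
    (hf : ∀ x, ‖f x‖ ≤ Cf * exp (-lam * |x|)) (hg : ∀ x, ‖g x‖ ≤ Cg * exp (-lam * |x|))
    (t ω : ℝ) :
    ‖stft f g t ω‖ ≤ (Cf * Cg * ∫ x, exp (-(lam - l) * |x|)) * exp (-l * |t|) := by
  have hint := (integrable_exp_neg_mul_abs (sub_pos.mpr hlam)).const_mul
    (Cf * Cg * exp (-l * |t|))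
  refine (norm_stft_le hint (fun x => ?_) ω).trans_eq (by rw [integral_const_mul]; ring)
  calc ‖f x‖ * ‖g (x - t)‖
      ≤ (Cf * exp (-lam * |x|)) * (Cg * exp (-lam * |x - t|)) :=
        mul_le_mul (hf x) (hg (x - t)) (norm_nonneg _) ((norm_nonneg _).trans (hf x))
    _ = Cf * Cg * (exp (-lam * |x|) * exp (-lam * |x - t|)) := by ring
    _ ≤ Cf * Cg * (exp (-l * |t|) * exp (-(lam - l) * |x|)) := by
        have hCf : 0 ≤ Cf := nonneg_of_mul_nonneg_left ((norm_nonneg _).trans (hf 0)) (exp_pos _)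
        have hCg : 0 ≤ Cg := nonneg_of_mul_nonneg_left ((norm_nonneg _).trans (hg 0)) (exp_pos _)
        exact mul_le_mul_of_nonneg_left
          (exp_neg_mul_abs_mul_exp_neg_mul_abs_sub_le hl hlam.le x t) (by positivity)
    _ = Cf * Cg * exp (-l * |t|) * exp (-(lam - l) * |x|) := by ring

end

theorem stft_decay_time_general
    (g : ℝ → ℂ)
    (C lam lam₁ : ℝ) (hlam : 0 < lam) (hlt : lam₁ < lam)
    (hdecay : ∀ t : ℝ, ‖g t‖ ≤ C * Real.exp (-lam * |t|)) :
    ∃ C₁ : ℝ, ∀ t ω : ℝ,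
      ‖∫ x : ℝ, g x * starRingEnd ℂ (g (x - t)) *
          Complex.exp (-2 * Real.pi * Complex.I * (x : ℂ) * (ω : ℂ))‖
        ≤ C₁ * Real.exp (-lam₁ * |t|) := by
  set l := max lam₁ 0
  have hl : l < lam := max_lt hlt hlam
  set C₁ := C * C * ∫ x, exp (-(lam - l) * |x|)
  refine ⟨C₁, fun t ω => ?_⟩
  have hbound : ‖stft g g t ω‖ ≤ C₁ * exp (-l * |t|) :=
    norm_stft_le_of_exp_decay (le_max_right _ _) hl hdecay hdecay t ω
  have hC₁ : 0 ≤ C₁ := nonneg_of_mul_nonneg_left ((norm_nonneg _).trans hbound) (exp_pos _)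
  calc _ = ‖stft g g t ω‖ := rfl
    _ ≤ C₁ * exp (-l * |t|) := hbound
    _ ≤ C₁ * exp (-lam₁ * |t|) := by
        gcongr
        exact le_max_left _ _

/-- Exponential decay of the window implies exponential decay in time
of the short-time Fourier transform (V_g g)(t, ω). -/
theorem stft_decay_time
    (g : ℝ → ℂ) (hg : MemLp g 2 (volume : Measure ℝ))
    (C lam lam₁ : ℝ) (hlam : 0 < lam) (hlt : lam₁ < lam)
    (hdecay : ∀ t : ℝ, ‖g t‖ ≤ C * Real.exp (-lam * |t|)) :
    ∃ C₁ : ℝ, ∀ t ω : ℝ,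
      ‖∫ x : ℝ, g x * starRingEnd ℂ (g (x - t)) *
          Complex.exp (-2 * Real.pi * Complex.I * (x : ℂ) * (ω : ℂ))‖
        ≤ C₁ * Real.exp (-lam₁ * |t|) :=
  stft_decay_time_general g C lam lam₁ hlam hlt hdecay
end

section
/- Let (g_{kl}) be a Riesz basis for its closed span in a Hilbert space with analysis operator H and bounds A, B. Define γ = H*(HH*)⁻¹σ and γ⁽ⁿ⁾ = H_n*(H_n H_n*)⁻¹ P_n σ, where H_n = P_n H are the finite sections and σ ∈ range(H). Then ‖γ − γ⁽ⁿ⁾‖ → 0 as n → ∞. -/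
/-!
Let `u_n = σ - H H* x_n` be the residual of the `n`-th finite section. It vanishes on the box
`max(|k|,|l|) ≤ n`, which carries both `x_n` and the truncation `z_n` of `y`; since `H H* y = σ`,
`‖H*(y - x_n)‖² = Re⟪u_n, y - x_n⟫ = Re⟪u_n, y - z_n⟫ ≤ ‖u_n‖ ‖y - z_n‖`.
The lower Riesz bound gives `A ‖x_n‖² ≤ ‖H* x_n‖² = Re⟪σ, x_n⟫`, so the `x_n`, hence the
residuals, are uniformly bounded, and the error tends to zero because `z_n → y`.
-/

open Filter Topology ContinuousLinearMap

theorem ContinuousLinearMap.norm_adjoint_apply_sq {𝕜 E F : Type*} [RCLike 𝕜]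
    [NormedAddCommGroup E] [InnerProductSpace 𝕜 E] [CompleteSpace E]
    [NormedAddCommGroup F] [InnerProductSpace 𝕜 F] [CompleteSpace F] (H : E →L[𝕜] F) (c : F) :
    ‖adjoint H c‖ ^ 2 = RCLike.re (inner 𝕜 (H (adjoint H c)) c) := by
  simpa using apply_norm_sq_eq_inner_adjoint_left (adjoint H) c

namespace Galerkin

variable {𝕜 E F : Type*} [RCLike 𝕜] [NormedAddCommGroup E] [InnerProductSpace 𝕜 E]
  [CompleteSpace E] [NormedAddCommGroup F] [InnerProductSpace 𝕜 F] [CompleteSpace F]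
  (H : E →L[𝕜] F) {V : Submodule 𝕜 F} {σ x : F}

theorem norm_le_div {A : ℝ} (hA : 0 < A) (hcoer : A * ‖x‖ ^ 2 ≤ ‖adjoint H x‖ ^ 2)
    (hx : x ∈ V) (hres : σ - H (adjoint H x) ∈ Vᗮ) : ‖x‖ ≤ ‖σ‖ / A := by
  have horth : inner 𝕜 (σ - H (adjoint H x)) x = 0 :=
    Submodule.inner_left_of_mem_orthogonal hx hres
  have hquad : A * ‖x‖ ^ 2 ≤ ‖σ‖ * ‖x‖ :=
    calc A * ‖x‖ ^ 2 ≤ RCLike.re (inner 𝕜 (H (adjoint H x)) x) := H.norm_adjoint_apply_sq x ▸ hcoer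
      _ = RCLike.re (inner 𝕜 σ x) := by
          rw [inner_sub_left, sub_eq_zero] at horth; rw [horth]
      _ ≤ ‖σ‖ * ‖x‖ := (RCLike.re_le_norm _).trans (norm_inner_le_norm _ _)
  rw [le_div_iff₀ hA]
  rcases (norm_nonneg x).eq_or_lt with h0 | h0
  · rw [← h0, zero_mul]; exact norm_nonneg σ
  · nlinarith

theorem norm_adjoint_sub_sq_le {y z : F} (hy : H (adjoint H y) = σ) (hx : x ∈ V)
    (hres : σ - H (adjoint H x) ∈ Vᗮ) (hz : z ∈ V) :
    ‖adjoint H y - adjoint H x‖ ^ 2 ≤ ‖σ - H (adjoint H x)‖ * ‖y - z‖ := by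
  have horth : inner 𝕜 (σ - H (adjoint H x)) (z - x) = 0 :=
    Submodule.inner_left_of_mem_orthogonal (V.sub_mem hz hx) hres
  calc ‖adjoint H y - adjoint H x‖ ^ 2
        = RCLike.re (inner 𝕜 (σ - H (adjoint H x)) (y - x)) := by
        rw [← map_sub, H.norm_adjoint_apply_sq, map_sub, map_sub, hy]
    _ = RCLike.re (inner 𝕜 (σ - H (adjoint H x)) (y - z)) := by
        rw [← sub_add_sub_cancel y z x, inner_add_right, horth, add_zero]
    _ ≤ ‖σ - H (adjoint H x)‖ * ‖y - z‖ := (RCLike.re_le_norm _).trans (norm_inner_le_norm _ _)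

theorem tendsto_norm_adjoint_sub {A : ℝ} (hA : 0 < A)
    (hcoer : ∀ c, A * ‖c‖ ^ 2 ≤ ‖adjoint H c‖ ^ 2) {y : F} (hy : H (adjoint H y) = σ)
    {V : ℕ → Submodule 𝕜 F} {x z : ℕ → F} (hx : ∀ n, x n ∈ V n)
    (hres : ∀ n, σ - H (adjoint H (x n)) ∈ (V n)ᗮ) (hz : ∀ n, z n ∈ V n)
    (hzy : Tendsto z atTop (𝓝 y)) :
    Tendsto (fun n => ‖adjoint H y - adjoint H (x n)‖) atTop (𝓝 0) := by
  set C := ‖σ‖ + ‖H‖ * ‖adjoint H‖ * (‖σ‖ / A)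
  have hres_le : ∀ n, ‖σ - H (adjoint H (x n))‖ ≤ C := fun n =>
    calc ‖σ - H (adjoint H (x n))‖ ≤ ‖σ‖ + ‖H‖ * ‖adjoint H‖ * ‖x n‖ := by
          grw [norm_sub_le, H.le_opNorm, (adjoint H).le_opNorm, mul_assoc]
      _ ≤ C := by grw [norm_le_div H hA (hcoer _) (hx n) (hres n)]
  have hsq : Tendsto (fun n => ‖adjoint H y - adjoint H (x n)‖ ^ 2) atTop (𝓝 0) := by
    refine squeeze_zero (fun n => by positivity) (fun n => ?_)
      (by simpa using (tendsto_iff_norm_sub_tendsto_zero.mp hzy).const_mul C)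
    grw [norm_adjoint_sub_sq_le H hy (hx n) (hres n) (hz n), hres_le n, norm_sub_rev]
  simpa using hsq.sqrt

end Galerkin

namespace lp

variable {ι : Type*} (𝕜 : Type*) [RCLike 𝕜]

def supportedOn (p : ENNReal) (s : Set ι) : Submodule 𝕜 (lp (fun _ : ι => 𝕜) p) where
  carrier := {c | ∀ i ∉ s, c i = 0}
  add_mem' ha hb i hi := by simp [ha i hi, hb i hi]
  zero_mem' _ _ := rfl
  smul_mem' a c hc i hi := by simp [hc i hi]

variable {𝕜}

theorem single_mem_supportedOn [DecidableEq ι] {p : ENNReal} {s : Set ι} {i : ι} (hi : i ∈ s)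
    (a : 𝕜) :
    lp.single p i a ∈ supportedOn 𝕜 p s := fun j hj => by
  simp [lp.single_apply, show j ≠ i by rintro rfl; exact hj hi]

theorem mem_orthogonal_supportedOn {s : Set ι} {c : lp (fun _ : ι => 𝕜) 2}
    (hc : ∀ i ∈ s, c i = 0) : c ∈ (supportedOn 𝕜 2 s)ᗮ := by
  intro v hv
  rw [lp.inner_eq_tsum]
  refine (tsum_congr fun i => ?_).trans tsum_zero
  by_cases hi : i ∈ s
  · simp [hc i hi]
  · simp [hv i hi]

end lp

noncomputable def box (n : ℕ) : Finset (ℤ × ℤ) :=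
  Finset.Icc (-(n : ℤ)) n ×ˢ Finset.Icc (-(n : ℤ)) n

theorem mem_box {n : ℕ} {p : ℤ × ℤ} : p ∈ box n ↔ p.1.natAbs ≤ n ∧ p.2.natAbs ≤ n := by
  simp only [box, Finset.mem_product, Finset.mem_Icc]
  omega

theorem tendsto_box : Tendsto box atTop atTop :=
  tendsto_atTop_finset_of_monotone (fun _ _ _ _ hp => by rw [mem_box] at *; omega)
    fun p => ⟨max p.1.natAbs p.2.natAbs, mem_box.2 ⟨le_max_left _ _, le_max_right _ _⟩⟩

/-- Applicability of the finite section method for computing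
γ = H*(HH*)⁻¹σ from a Riesz-basis analysis operator H: the finite-section
approximations γ⁽ⁿ⁾ converge to γ in norm. -/
theorem finite_section_convergence
    {E : Type*} [NormedAddCommGroup E] [InnerProductSpace ℂ E] [CompleteSpace E]
    (H : E →L[ℂ] lp (fun _ : ℤ × ℤ => ℂ) 2) (A B : ℝ) (hA : 0 < A)
    (hRiesz : ∀ c : lp (fun _ : ℤ × ℤ => ℂ) 2,
      A * ‖c‖ ^ 2 ≤ ‖(ContinuousLinearMap.adjoint H) c‖ ^ 2 ∧
        ‖(ContinuousLinearMap.adjoint H) c‖ ^ 2 ≤ B * ‖c‖ ^ 2)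
    (σ y : lp (fun _ : ℤ × ℤ => ℂ) 2)
    -- y solves the infinite system (HH*) y = σ, so γ = H* y
    (hy : H ((ContinuousLinearMap.adjoint H) y) = σ)
    -- x n solves the n-th finite section of the system, so γ⁽ⁿ⁾ = H* (x n)
    (x : ℕ → lp (fun _ : ℤ × ℤ => ℂ) 2)
    (hxsupp : ∀ (n : ℕ) (p : ℤ × ℤ), ¬(p.1.natAbs ≤ n ∧ p.2.natAbs ≤ n) → x n p = 0)
    (hxeq : ∀ (n : ℕ) (p : ℤ × ℤ), p.1.natAbs ≤ n → p.2.natAbs ≤ n →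
      (H ((ContinuousLinearMap.adjoint H) (x n))) p = σ p) :
    Tendsto (fun n =>
        ‖(ContinuousLinearMap.adjoint H) y - (ContinuousLinearMap.adjoint H) (x n)‖)
      atTop (nhds 0) := by
  let V n := lp.supportedOn ℂ 2 (box n : Set (ℤ × ℤ))
  have hx n : x n ∈ V n := fun p hp => hxsupp n p (mt mem_box.2 hp)
  have hres n : σ - H (adjoint H (x n)) ∈ (V n)ᗮ :=
    lp.mem_orthogonal_supportedOn fun p hp => by
    obtain ⟨h1, h2⟩ := mem_box.1 hp
    simp [hxeq n p h1 h2]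
  have hz n : ∑ p ∈ box n, lp.single 2 p (y p) ∈ V n :=
    Submodule.sum_mem _ fun p hp => lp.single_mem_supportedOn hp _
  exact Galerkin.tendsto_norm_adjoint_sub H hA (fun c => (hRiesz c).1) hy hx hres hz
    ((lp.hasSum_single ENNReal.ofNat_ne_top y).comp tendsto_box)
end

section
/- Let M be a bi-infinite self-adjoint positive definite matrix with entries satisfying |M_{kl}| ≤ D e^{−λ|k−l|} for some λ > 0, bounded and boundedly invertible on ℓ²(ℤ) with A·I ≤ M ≤ B·I. Then there exist λ₂ > 0 and a constant C₂ depending only on λ, D, A, B such that |(M⁻¹)_{kl}| ≤ C₂ e^{−λ₂|k−l|}. -/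
/-!
Coercivity makes `S = 1 - t • T` a strict contraction for a small `t > 0`, so that
`T⁻¹ = t • ∑ Sⁿ`. The entries of `Sⁿ` obey two bounds: `‖S‖ⁿ`, and, by convolving the
exponentially decaying kernel of `S` with itself (at the cost of half its rate),
`ρⁿ e^{-λ|k-l|/2}` with a possibly large `ρ`. Their geometric mean with weight `θ` on the second
is `(‖S‖^{1-θ} ρ^θ)ⁿ e^{-θλ|k-l|/2}`, geometric in `n` once `θ` is small, so the Neumann series
converges entrywise with exponential off-diagonal decay.
-/

open Real Filter Topology Set

section HilbertSpace

variable {𝕜 E : Type*} [RCLike 𝕜] [NormedAddCommGroup E] [InnerProductSpace 𝕜 E]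

lemma norm_sub_smul_apply_sq_le {T : E →L[𝕜] E} {A t : ℝ}
    (hlow : ∀ f, A * ‖f‖ ^ 2 ≤ RCLike.re (inner 𝕜 (T f) f)) (ht : 0 ≤ t)
    (htT : t * ‖T‖ ^ 2 ≤ A) (f : E) :
    ‖f - (t : 𝕜) • T f‖ ^ 2 ≤ (1 - t * A) * ‖f‖ ^ 2 := by
  have hexpand : ‖f - (t : 𝕜) • T f‖ ^ 2
      = ‖f‖ ^ 2 - 2 * t * RCLike.re (inner 𝕜 (T f) f) + t ^ 2 * ‖T f‖ ^ 2 := by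
    rw [@norm_sub_sq 𝕜, inner_smul_right, RCLike.re_ofReal_mul, ← inner_re_symm, norm_smul,
      RCLike.norm_ofReal, abs_of_nonneg ht]
    ring
  have hTf : ‖T f‖ ^ 2 ≤ ‖T‖ ^ 2 * ‖f‖ ^ 2 := by
    rw [← mul_pow]; exact pow_le_pow_left₀ (norm_nonneg _) (T.le_opNorm f) 2
  have hquad : t ^ 2 * ‖T f‖ ^ 2 ≤ t * A * ‖f‖ ^ 2 := calc
    t ^ 2 * ‖T f‖ ^ 2 ≤ t * (t * ‖T‖ ^ 2) * ‖f‖ ^ 2 := by nlinarith [sq_nonneg t]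
    _ ≤ t * A * ‖f‖ ^ 2 := by gcongr
  nlinarith [hlow f]

theorem exists_norm_one_sub_smul_lt_one {T : E →L[𝕜] E} {A : ℝ} (hA : 0 < A)
    (hlow : ∀ f, A * ‖f‖ ^ 2 ≤ RCLike.re (inner 𝕜 (T f) f)) :
    ∃ t : ℝ, 0 < t ∧ ‖1 - (t : 𝕜) • T‖ < 1 := by
  -- any `t ∈ (0, A / ‖T‖²]` works; the `A ^ 2` only keeps the denominator positive
  set t := A / (‖T‖ ^ 2 + A ^ 2)
  have ht : 0 < t := by positivity
  have htT : t * ‖T‖ ^ 2 ≤ A := by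
    rw [div_mul_eq_mul_div, div_le_iff₀ (by positivity)]; nlinarith [sq_nonneg A]
  have hbound : ‖1 - (t : 𝕜) • T‖ ≤ √(1 - t * A) := by
    refine ContinuousLinearMap.opNorm_le_bound _ (sqrt_nonneg _) fun f => ?_
    rw [← sqrt_sq (norm_nonneg _), ← sqrt_sq (norm_nonneg f), ← sqrt_mul' _ (by positivity)]
    exact sqrt_le_sqrt (norm_sub_smul_apply_sq_le hlow ht.le htT f)
  refine ⟨t, ht, hbound.trans_lt ?_⟩
  rw [sqrt_lt' one_pos, one_pow]
  linarith [mul_pos ht hA]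

end HilbertSpace

lemma summable_exp_neg_mul_abs_int {μ : ℝ} (hμ : 0 < μ) :
    Summable fun j : ℤ => exp (-μ * |(j : ℝ)|) := by
  have hnat : Summable fun n : ℕ => exp (n * -μ) := summable_exp_nat_mul_iff.2 (by linarith)
  refine Summable.of_nat_of_neg ?_ ?_ <;> refine hnat.congr fun n => ?_ <;> simp [mul_comm]

lemma hasSum_exp_neg_mul_abs_sub {μ : ℝ} (hμ : 0 < μ) (k : ℤ) :
    HasSum (fun m : ℤ => exp (-μ * |(k : ℝ) - m|)) (∑' j : ℤ, exp (-μ * |(j : ℝ)|)) := by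
  refine ((Equiv.subLeft k).hasSum_iff.2 (summable_exp_neg_mul_abs_int hμ).hasSum).congr_fun ?_
  intro m
  simp

lemma min_le_rpow_mul_rpow {x y θ : ℝ} (hx : 0 ≤ x) (hy : 0 ≤ y) (hθ₀ : 0 ≤ θ) (hθ₁ : θ ≤ 1) :
    min x y ≤ x ^ (1 - θ) * y ^ θ := by
  have hmin : 0 ≤ min x y := le_min hx hy
  calc min x y = min x y ^ (1 - θ) * min x y ^ θ := by
        rw [← rpow_add' hmin (by norm_num), sub_add_cancel, rpow_one]
    _ ≤ x ^ (1 - θ) * y ^ θ :=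
        mul_le_mul (rpow_le_rpow hmin (min_le_left x y) (by linarith))
          (rpow_le_rpow hmin (min_le_right x y) hθ₀) (by positivity) (by positivity)

lemma exists_rpow_mul_rpow_lt_one {q ρ : ℝ} (hq₀ : 0 < q) (hq₁ : q < 1) (hρ : 0 < ρ) :
    ∃ θ ∈ Ioo (0 : ℝ) 1, q ^ (1 - θ) * ρ ^ θ < 1 := by
  have hcont : Tendsto (fun θ : ℝ => q ^ (1 - θ) * ρ ^ θ) (𝓝[>] 0) (𝓝 q) := by
    have : Continuous (fun θ : ℝ => q ^ (1 - θ) * ρ ^ θ) := by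
      fun_prop (disch := positivity)
    simpa using (this.tendsto 0).mono_left nhdsWithin_le_nhds
  exact ((hcont.eventually (gt_mem_nhds hq₁)).and (Ioo_mem_nhdsGT one_pos)).exists.imp
    fun θ h => ⟨h.2, h.1⟩

section LpInt

variable {𝕜 : Type*} [RCLike 𝕜]

local notation "ℓ²(ℤ, " 𝕜 ")" => lp (fun _ : ℤ => 𝕜) 2

noncomputable def matrixEntry (O : ℓ²(ℤ, 𝕜) →L[𝕜] ℓ²(ℤ, 𝕜)) (k l : ℤ) : 𝕜 :=
  O (lp.single 2 l 1) k

lemma norm_inner_single_single (O : ℓ²(ℤ, 𝕜) →L[𝕜] ℓ²(ℤ, 𝕜)) (k l : ℤ) :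
    ‖inner 𝕜 (O (lp.single 2 l 1)) (lp.single 2 k 1)‖ = ‖matrixEntry O k l‖ := by
  rw [← inner_conj_symm, RCLike.norm_conj, lp.inner_single_left]
  simp [matrixEntry]

lemma norm_matrixEntry_le (O : ℓ²(ℤ, 𝕜) →L[𝕜] ℓ²(ℤ, 𝕜)) (k l : ℤ) :
    ‖matrixEntry O k l‖ ≤ ‖O‖ :=
  calc ‖matrixEntry O k l‖ ≤ ‖O (lp.single 2 l 1)‖ := lp.norm_apply_le_norm two_ne_zero _ k
    _ ≤ ‖O‖ * ‖(lp.single 2 l 1 : ℓ²(ℤ, 𝕜))‖ := O.le_opNorm _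
    _ = ‖O‖ := by rw [lp.norm_single two_pos, norm_one, mul_one]

@[simp]
lemma matrixEntry_one (k l : ℤ) :
    matrixEntry (1 : ℓ²(ℤ, 𝕜) →L[𝕜] ℓ²(ℤ, 𝕜)) k l = if k = l then 1 else 0 := by
  rcases eq_or_ne k l with rfl | h
  · simp [matrixEntry]
  · simp [matrixEntry, h]

@[simp]
lemma matrixEntry_sub (O₁ O₂ : ℓ²(ℤ, 𝕜) →L[𝕜] ℓ²(ℤ, 𝕜)) (k l : ℤ) :
    matrixEntry (O₁ - O₂) k l = matrixEntry O₁ k l - matrixEntry O₂ k l := rfl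

@[simp]
lemma matrixEntry_smul (c : 𝕜) (O : ℓ²(ℤ, 𝕜) →L[𝕜] ℓ²(ℤ, 𝕜)) (k l : ℤ) :
    matrixEntry (c • O) k l = c * matrixEntry O k l := rfl

lemma hasSum_matrixEntry_mul (O₁ O₂ : ℓ²(ℤ, 𝕜) →L[𝕜] ℓ²(ℤ, 𝕜)) (k l : ℤ) :
    HasSum (fun m => matrixEntry O₁ k m * matrixEntry O₂ m l) (matrixEntry (O₁ * O₂) k l) := by
  have h := ((lp.evalCLM 𝕜 (fun _ : ℤ => 𝕜) 2 k).comp O₁).hasSum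
    (lp.hasSum_single ENNReal.ofNat_ne_top (O₂ (lp.single 2 l 1)))
  refine h.congr_fun fun m => ?_
  have hsingle : lp.single 2 m (O₂ (lp.single 2 l 1) m) =
      O₂ (lp.single 2 l 1) m • (lp.single 2 m 1 : ℓ²(ℤ, 𝕜)) := by
    rw [← lp.single_smul, smul_eq_mul, mul_one]
  simp only [hsingle, map_smul, smul_eq_mul, ContinuousLinearMap.comp_apply]
  exact mul_comm _ _

lemma hasSum_matrixEntry {ι : Type*} {O : ι → ℓ²(ℤ, 𝕜) →L[𝕜] ℓ²(ℤ, 𝕜)}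
    {S : ℓ²(ℤ, 𝕜) →L[𝕜] ℓ²(ℤ, 𝕜)} (h : HasSum O S) (k l : ℤ) :
    HasSum (fun n => matrixEntry (O n) k l) (matrixEntry S k l) :=
  ((lp.evalCLM 𝕜 (fun _ : ℤ => 𝕜) 2 k).comp
    (ContinuousLinearMap.apply 𝕜 _ (lp.single 2 l 1))).hasSum h

def HasExpDecay (O : ℓ²(ℤ, 𝕜) →L[𝕜] ℓ²(ℤ, 𝕜)) (C μ : ℝ) : Prop :=
  ∀ k l : ℤ, ‖matrixEntry O k l‖ ≤ C * exp (-μ * |(k : ℝ) - l|)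

variable {O O₁ O₂ S : ℓ²(ℤ, 𝕜) →L[𝕜] ℓ²(ℤ, 𝕜)} {C C' C₁ C₂ μ ν : ℝ}

lemma HasExpDecay.nonneg (h : HasExpDecay O C μ) : 0 ≤ C := by
  simpa using (norm_nonneg _).trans (h 0 0)

lemma HasExpDecay.mono (h : HasExpDecay O C μ) (hC : C ≤ C') : HasExpDecay O C' μ :=
  fun k l => (h k l).trans (mul_le_mul_of_nonneg_right hC (exp_pos _).le)

lemma hasExpDecay_one (μ : ℝ) : HasExpDecay (1 : ℓ²(ℤ, 𝕜) →L[𝕜] ℓ²(ℤ, 𝕜)) 1 μ := by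
  intro k l
  rcases eq_or_ne k l with rfl | h
  · simp
  · simp only [matrixEntry_one, h, if_false, norm_zero]
    positivity

lemma HasExpDecay.sub (h₁ : HasExpDecay O₁ C₁ μ) (h₂ : HasExpDecay O₂ C₂ μ) :
    HasExpDecay (O₁ - O₂) (C₁ + C₂) μ := fun k l =>
  calc ‖matrixEntry (O₁ - O₂) k l‖ ≤ ‖matrixEntry O₁ k l‖ + ‖matrixEntry O₂ k l‖ := by
        rw [matrixEntry_sub]; exact norm_sub_le _ _
    _ ≤ (C₁ + C₂) * exp (-μ * |(k : ℝ) - l|) := by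
        rw [add_mul]; exact add_le_add (h₁ k l) (h₂ k l)

lemma HasExpDecay.const_smul (h : HasExpDecay O C μ) (c : 𝕜) :
    HasExpDecay (c • O) (‖c‖ * C) μ := fun k l => by
  rw [matrixEntry_smul, norm_mul, mul_assoc]
  exact mul_le_mul_of_nonneg_left (h k l) (norm_nonneg c)

lemma HasExpDecay.mul (h₁ : HasExpDecay O₁ C₁ μ) (h₂ : HasExpDecay O₂ C₂ ν) (hμ : 0 ≤ μ)
    (hμν : μ < ν) :
    HasExpDecay (O₁ * O₂) (C₁ * C₂ * ∑' j : ℤ, exp (-(ν - μ) * |(j : ℝ)|)) μ := by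
  intro k l
  have hterm (m : ℤ) : ‖matrixEntry O₁ k m * matrixEntry O₂ m l‖ ≤
      C₁ * C₂ * exp (-μ * |(k : ℝ) - l|) * exp (-(ν - μ) * |(l : ℝ) - m|) := by
    have htri : -μ * (|(k : ℝ) - m| + |(m : ℝ) - l|) ≤ -μ * |(k : ℝ) - l| := by
      nlinarith [abs_sub_le (k : ℝ) m l]
    calc ‖matrixEntry O₁ k m * matrixEntry O₂ m l‖
        ≤ (C₁ * exp (-μ * |(k : ℝ) - m|)) * (C₂ * exp (-ν * |(m : ℝ) - l|)) := by
          rw [norm_mul]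
          exact mul_le_mul (h₁ k m) (h₂ m l) (norm_nonneg _) ((norm_nonneg _).trans (h₁ k m))
      _ = C₁ * C₂ * exp (-μ * (|(k : ℝ) - m| + |(m : ℝ) - l|)) *
            exp (-(ν - μ) * |(l : ℝ) - m|) := by
          rw [abs_sub_comm (l : ℝ), mul_mul_mul_comm, mul_assoc (C₁ * C₂), ← exp_add, ← exp_add]
          ring_nf
      _ ≤ C₁ * C₂ * exp (-μ * |(k : ℝ) - l|) * exp (-(ν - μ) * |(l : ℝ) - m|) := by
          have := mul_nonneg h₁.nonneg h₂.nonneg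
          gcongr
  have hbound := (hasSum_exp_neg_mul_abs_sub (sub_pos.2 hμν) l).mul_left
    (C₁ * C₂ * exp (-μ * |(k : ℝ) - l|))
  exact ((hasSum_matrixEntry_mul O₁ O₂ k l).norm_le_of_bounded hbound hterm).trans_eq (by ring)

lemma HasExpDecay.pow (h : HasExpDecay S C ν) (hμ : 0 ≤ μ) (hμν : μ < ν) (n : ℕ) :
    HasExpDecay (S ^ n) ((C * ∑' j : ℤ, exp (-(ν - μ) * |(j : ℝ)|)) ^ n) μ := by
  induction n with
  | zero => simpa using hasExpDecay_one μ
  | succ n ih => simpa only [pow_succ, mul_assoc] using ih.mul h hμ hμν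

lemma HasExpDecay.interpolate {x θ : ℝ} (h : HasExpDecay O C μ) (hO : ‖O‖ ≤ x) (hθ₀ : 0 ≤ θ)
    (hθ₁ : θ ≤ 1) : HasExpDecay O (x ^ (1 - θ) * C ^ θ) (θ * μ) := fun k l =>
  calc ‖matrixEntry O k l‖ ≤ min x (C * exp (-μ * |(k : ℝ) - l|)) :=
        le_min ((norm_matrixEntry_le O k l).trans hO) (h k l)
    _ ≤ x ^ (1 - θ) * (C * exp (-μ * |(k : ℝ) - l|)) ^ θ :=
        min_le_rpow_mul_rpow ((norm_nonneg _).trans hO)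
          (mul_nonneg h.nonneg (exp_pos _).le) hθ₀ hθ₁
    _ = x ^ (1 - θ) * C ^ θ * exp (-(θ * μ) * |(k : ℝ) - l|) := by
        rw [mul_rpow h.nonneg (exp_pos _).le, ← exp_mul]
        ring_nf

lemma HasExpDecay.of_hasSum {ι : Type*} {O : ι → ℓ²(ℤ, 𝕜) →L[𝕜] ℓ²(ℤ, 𝕜)} {c : ℝ} {C : ι → ℝ}
    (hO : HasSum O S) (h : ∀ n, HasExpDecay (O n) (C n) μ) (hC : HasSum C c) :
    HasExpDecay S c μ := fun k l =>
  (hasSum_matrixEntry hO k l).norm_le_of_bounded (hC.mul_right _) fun n => h n k l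

theorem HasExpDecay.tsum_pow (h : HasExpDecay S C ν) (hν : 0 < ν) (hS : ‖S‖ < 1) :
    ∃ μ > 0, ∃ C', HasExpDecay (∑' n, S ^ n : ℓ²(ℤ, 𝕜) →L[𝕜] ℓ²(ℤ, 𝕜)) C' μ := by
  set ρ := (C + 1) * ∑' j : ℤ, exp (-(ν - ν / 2) * |(j : ℝ)|)
  have hρ : 0 < ρ := mul_pos (by linarith [h.nonneg]) <|
    (summable_exp_neg_mul_abs_int (by linarith)).tsum_pos (fun _ => (exp_pos _).le) 0 (exp_pos _)
  obtain ⟨q, hSq, hq₁⟩ := exists_between hS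
  have hq₀ : 0 < q := (norm_nonneg S).trans_lt hSq
  obtain ⟨θ, ⟨hθ₀, hθ₁⟩, hr⟩ := exists_rpow_mul_rpow_lt_one hq₀ hq₁ hρ
  have hterm (n : ℕ) : HasExpDecay (S ^ n) ((q ^ (1 - θ) * ρ ^ θ) ^ n) (θ * (ν / 2)) := by
    have hnorm : ‖S ^ n‖ ≤ q ^ n := by
      rcases n.eq_zero_or_pos with rfl | hn
      · rw [pow_zero, pow_zero]
        exact ContinuousLinearMap.norm_id_le
      · exact (norm_pow_le' S hn).trans (pow_le_pow_left₀ (norm_nonneg S) hSq.le n)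
    have := ((h.mono (le_add_of_nonneg_right zero_le_one)).pow (half_pos hν).le
      (half_lt_self hν) n).interpolate hnorm hθ₀.le hθ₁.le
    rwa [← rpow_pow_comm hq₀.le, ← rpow_pow_comm hρ.le, ← mul_pow] at this
  exact ⟨θ * (ν / 2), by positivity, _, HasExpDecay.of_hasSum
    (summable_geometric_of_norm_lt_one hS).hasSum hterm
    (hasSum_geometric_of_lt_one (by positivity) hr)⟩

end LpInt

theorem jaffard_exponential_inverse_decay_general
    (T : lp (fun _ : ℤ => ℂ) 2 →L[ℂ] lp (fun _ : ℤ => ℂ) 2)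
    (A D lam : ℝ) (hA : 0 < A) (hlam : 0 < lam)
    (hlow : ∀ f, A * ‖f‖ ^ 2 ≤ (inner ℂ (T f) f : ℂ).re)
    (hdecay : ∀ k l : ℤ,
      ‖(inner ℂ (T (lp.single 2 l (1 : ℂ))) (lp.single 2 k (1 : ℂ)) : ℂ)‖
        ≤ D * Real.exp (-lam * |(k : ℝ) - (l : ℝ)|)) :
    ∃ lam₂ C₂ : ℝ, 0 < lam₂ ∧
      ∃ Tinv : lp (fun _ : ℤ => ℂ) 2 →L[ℂ] lp (fun _ : ℤ => ℂ) 2,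
        Tinv.comp T = ContinuousLinearMap.id ℂ _ ∧
        T.comp Tinv = ContinuousLinearMap.id ℂ _ ∧
        ∀ k l : ℤ,
          ‖(inner ℂ (Tinv (lp.single 2 l (1 : ℂ))) (lp.single 2 k (1 : ℂ)) : ℂ)‖
            ≤ C₂ * Real.exp (-lam₂ * |(k : ℝ) - (l : ℝ)|) := by
  obtain ⟨t, -, hS⟩ := exists_norm_one_sub_smul_lt_one (T := T) hA hlow
  set S := 1 - (t : ℂ) • T
  have hTdecay : HasExpDecay T D lam := fun k l => by
    simpa only [norm_inner_single_single] using hdecay k l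
  obtain ⟨lam₂, hlam₂, C, hdecay₂⟩ :=
    ((hasExpDecay_one lam).sub (hTdecay.const_smul (t : ℂ))).tsum_pow hlam hS
  have htT : (t : ℂ) • T = 1 - S := (sub_sub_cancel _ _).symm
  refine ⟨lam₂, ‖(t : ℂ)‖ * C, hlam₂, (t : ℂ) • ∑' n, S ^ n, ?_, ?_, fun k l => ?_⟩
  · show ((t : ℂ) • ∑' n, S ^ n) * T = 1
    rw [smul_mul_assoc, ← mul_smul_comm, htT, geom_series_mul_neg S hS]
  · show T * ((t : ℂ) • ∑' n, S ^ n) = 1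
    rw [mul_smul_comm, ← smul_mul_assoc, htT, mul_neg_geom_series S hS]
  · rw [norm_inner_single_single]
    exact hdecay₂.const_smul (t : ℂ) k l

/-- Jaffard-type: A bounded, boundedly invertible, self-adjoint
positive definite bi-infinite matrix with exponential off-diagonal decay has an
inverse with exponential off-diagonal decay, with constants depending only on
λ, D, A, B. -/
theorem jaffard_exponential_inverse_decay
    (T : lp (fun _ : ℤ => ℂ) 2 →L[ℂ] lp (fun _ : ℤ => ℂ) 2)
    (hsa : IsSelfAdjoint T)
    (A B D lam : ℝ) (hA : 0 < A) (hlam : 0 < lam)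
    (hlow : ∀ f, A * ‖f‖ ^ 2 ≤ (inner ℂ (T f) f : ℂ).re)
    (hup : ∀ f, (inner ℂ (T f) f : ℂ).re ≤ B * ‖f‖ ^ 2)
    (hdecay : ∀ k l : ℤ,
      ‖(inner ℂ (T (lp.single 2 l (1 : ℂ))) (lp.single 2 k (1 : ℂ)) : ℂ)‖
        ≤ D * Real.exp (-lam * |(k : ℝ) - (l : ℝ)|)) :
    ∃ lam₂ C₂ : ℝ, 0 < lam₂ ∧
      ∃ Tinv : lp (fun _ : ℤ => ℂ) 2 →L[ℂ] lp (fun _ : ℤ => ℂ) 2,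
        Tinv.comp T = ContinuousLinearMap.id ℂ _ ∧
        T.comp Tinv = ContinuousLinearMap.id ℂ _ ∧
        ∀ k l : ℤ,
          ‖(inner ℂ (Tinv (lp.single 2 l (1 : ℂ))) (lp.single 2 k (1 : ℂ)) : ℂ)‖
            ≤ C₂ * Real.exp (-lam₂ * |(k : ℝ) - (l : ℝ)|) :=
  jaffard_exponential_inverse_decay_general T A D lam hA hlam hlow hdecay
end
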